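/- arXiv:2408.14733 — 5 statements merged into one kernel-verified Lean document; each statement's English description precedes it below -/
import Mathlib

section
/- Let ω = Σ_{1≤i<j≤6} w_{ij} e^i∧e^j be an arbitrary 2-form on 𝔤₁. Then ω∧dω = 0 if and only if the coefficients satisfy the three equations: −w₂₄w₅₆ + w₂₅w₄₆ − w₂₆w₄₅ = 0, −w₁₄w₅₆ + w₁₅w₄₆ − w₁₆w₄₅ = 0, and w₁₃w₄₆ − w₁₄w₃₆ + w₁₆w₃₄ + w₂₃w₅₆ − w₂₅w₃₆ + w₂₆w₃₅ = 0. -/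
open Finset

set_option maxRecDepth 4000
set_option maxHeartbeats 1600000

noncomputable section

/-- The underlying vector space `ℝ⁶`. -/
abbrev V : Type := Fin 6 → ℝ

/-- The `i`-th standard basis vector `eᵢ` (0-indexed: `e 0 = e₁`, …, `e 5 = e₆`). -/
def e (i : Fin 6) : V := Pi.single i 1

/-- The Lie bracket of the nilpotent Lie algebra 𝔤₁, with nonzero brackets
`[e₁,e₃]=e₄`, `[e₁,e₄]=e₆`, `[e₂,e₃]=e₅`, `[e₂,e₅]=e₆` (0-indexed below). -/
def bra (X Y : V) : V :=
  (X 0 * Y 2 - X 2 * Y 0) • e 3 + (X 1 * Y 2 - X 2 * Y 1) • e 4 +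
    (X 0 * Y 3 - X 3 * Y 0 + X 1 * Y 4 - X 4 * Y 1) • e 5

/-- The Chevalley–Eilenberg differential of a 2-form:
`dω(X,Y,Z) = −ω([X,Y],Z) + ω([X,Z],Y) − ω([Y,Z],X)`. -/
def dOm (ω : V → V → ℝ) (X Y Z : V) : ℝ :=
  -ω (bra X Y) Z + ω (bra X Z) Y - ω (bra Y Z) X

/-- The wedge product of a 2-form and a 3-form, as a 5-form:
`(ω∧τ)(X₁,…,X₅) = (1/(2!·3!)) Σ_{σ∈S₅} sgn(σ) ω(X_{σ1},X_{σ2}) τ(X_{σ3},X_{σ4},X_{σ5})`. -/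
def wedge23 (ω : V → V → ℝ) (τ : V → V → V → ℝ) (Xs : Fin 5 → V) : ℝ :=
  (1 / 12 : ℝ) * ∑ σ : Equiv.Perm (Fin 5),
    ((Equiv.Perm.sign σ : ℤ) : ℝ) *
      (ω (Xs (σ 0)) (Xs (σ 1)) * τ (Xs (σ 2)) (Xs (σ 3)) (Xs (σ 4)))

/-- The 2-form `ω = Σ_{i<j} w_{ij} e^i ∧ e^j` determined by the coefficients `w i j`
(only the entries with `i < j` are used). -/
def form2 (w : Fin 6 → Fin 6 → ℝ) (X Y : V) : ℝ :=
  ∑ i : Fin 6, ∑ j : Fin 6, if i < j then w i j * (X i * Y j - X j * Y i) else 0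


lemma e_apply (i j : Fin 6) : e i j = if j = i then 1 else 0 := by
  rw [e, Pi.single_apply]

lemma form2_eq (w : Fin 6 → Fin 6 → ℝ) (X Y : V) : form2 w X Y = (X 0*Y 1*w 0 1 + X 0*Y 2*w 0 2 + X 0*Y 3*w 0 3 + X 0*Y 4*w 0 4 + X 0*Y 5*w 0 5 - X 1*Y 0*w 0 1 + X 1*Y 2*w 1 2 + X 1*Y 3*w 1 3 + X 1*Y 4*w 1 4 + X 1*Y 5*w 1 5 - X 2*Y 0*w 0 2 - X 2*Y 1*w 1 2 + X 2*Y 3*w 2 3 + X 2*Y 4*w 2 4 + X 2*Y 5*w 2 5 - X 3*Y 0*w 0 3 - X 3*Y 1*w 1 3 - X 3*Y 2*w 2 3 + X 3*Y 4*w 3 4 + X 3*Y 5*w 3 5 - X 4*Y 0*w 0 4 - X 4*Y 1*w 1 4 - X 4*Y 2*w 2 4 - X 4*Y 3*w 3 4 + X 4*Y 5*w 4 5 - X 5*Y 0*w 0 5 - X 5*Y 1*w 1 5 - X 5*Y 2*w 2 5 - X 5*Y 3*w 3 5 - X 5*Y 4*w 4 5) := by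
  simp only [form2, Fin.sum_univ_six, Fin.reduceLT, reduceIte]
  ring

lemma bra_0 (X Y : V) : bra X Y 0 = 0 := by simp [bra, e, Pi.single_apply]
lemma bra_1 (X Y : V) : bra X Y 1 = 0 := by simp [bra, e, Pi.single_apply]
lemma bra_2 (X Y : V) : bra X Y 2 = 0 := by simp [bra, e, Pi.single_apply]
lemma bra_3 (X Y : V) : bra X Y 3 = X 0 * Y 2 - X 2 * Y 0 := by simp [bra, e, Pi.single_apply]
lemma bra_4 (X Y : V) : bra X Y 4 = X 1 * Y 2 - X 2 * Y 1 := by simp [bra, e, Pi.single_apply]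
lemma bra_5 (X Y : V) : bra X Y 5 = X 0 * Y 3 - X 3 * Y 0 + X 1 * Y 4 - X 4 * Y 1 := by
  simp [bra, e, Pi.single_apply]

lemma dOm_eq (w : Fin 6 → Fin 6 → ℝ) (X Y Z : V) : dOm (form2 w) X Y Z = (X 0*Y 1*Z 2*w 0 4 - X 0*Y 1*Z 2*w 1 3 - X 0*Y 1*Z 3*w 1 5 + X 0*Y 1*Z 4*w 0 5 - X 0*Y 2*Z 1*w 0 4 + X 0*Y 2*Z 1*w 1 3 - X 0*Y 2*Z 3*w 2 5 - X 0*Y 2*Z 4*w 3 4 - X 0*Y 2*Z 5*w 3 5 + X 0*Y 3*Z 1*w 1 5 + X 0*Y 3*Z 2*w 2 5 + X 0*Y 3*Z 4*w 4 5 - X 0*Y 4*Z 1*w 0 5 + X 0*Y 4*Z 2*w 3 4 - X 0*Y 4*Z 3*w 4 5 + X 0*Y 5*Z 2*w 3 5 - X 1*Y 0*Z 2*w 0 4 + X 1*Y 0*Z 2*w 1 3 + X 1*Y 0*Z 3*w 1 5 - X 1*Y 0*Z 4*w 0 5 + X 1*Y 2*Z 0*w 0 4 - X 1*Y 2*Z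 0*w 1 3 + X 1*Y 2*Z 3*w 3 4 - X 1*Y 2*Z 4*w 2 5 - X 1*Y 2*Z 5*w 4 5 - X 1*Y 3*Z 0*w 1 5 - X 1*Y 3*Z 2*w 3 4 - X 1*Y 3*Z 4*w 3 5 + X 1*Y 4*Z 0*w 0 5 + X 1*Y 4*Z 2*w 2 5 + X 1*Y 4*Z 3*w 3 5 + X 1*Y 5*Z 2*w 4 5 + X 2*Y 0*Z 1*w 0 4 - X 2*Y 0*Z 1*w 1 3 + X 2*Y 0*Z 3*w 2 5 + X 2*Y 0*Z 4*w 3 4 + X 2*Y 0*Z 5*w 3 5 - X 2*Y 1*Z 0*w 0 4 + X 2*Y 1*Z 0*w 1 3 - X 2*Y 1*Z 3*w 3 4 + X 2*Y 1*Z 4*w 2 5 + X 2*Y 1*Z 5*w 4 5 - X 2*Y 3*Z 0*w 2 5 + X 2*Y 3*Z 1*w 3 4 - X 2*Y 4*Z 0*w 3 4 - X 2*Y 4*Z 1*w 2 5 - X 2*Y 5*Z 0*w 3 5 - X 2*Y 5*Z 1*w 4 5 - X 3*Y 0*Z 1*w 1 5 - X 3*Y 0*Z 2*w 2 5 - X 3*Y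 0*Z 4*w 4 5 + X 3*Y 1*Z 0*w 1 5 + X 3*Y 1*Z 2*w 3 4 + X 3*Y 1*Z 4*w 3 5 + X 3*Y 2*Z 0*w 2 5 - X 3*Y 2*Z 1*w 3 4 + X 3*Y 4*Z 0*w 4 5 - X 3*Y 4*Z 1*w 3 5 + X 4*Y 0*Z 1*w 0 5 - X 4*Y 0*Z 2*w 3 4 + X 4*Y 0*Z 3*w 4 5 - X 4*Y 1*Z 0*w 0 5 - X 4*Y 1*Z 2*w 2 5 - X 4*Y 1*Z 3*w 3 5 + X 4*Y 2*Z 0*w 3 4 + X 4*Y 2*Z 1*w 2 5 - X 4*Y 3*Z 0*w 4 5 + X 4*Y 3*Z 1*w 3 5 - X 5*Y 0*Z 2*w 3 5 - X 5*Y 1*Z 2*w 4 5 + X 5*Y 2*Z 0*w 3 5 + X 5*Y 2*Z 1*w 4 5) := by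
  simp only [dOm, form2_eq, bra_0, bra_1, bra_2, bra_3, bra_4, bra_5]
  ring

lemma form2_anti (w : Fin 6 → Fin 6 → ℝ) (X Y : V) : form2 w Y X = -form2 w X Y := by
  simp only [form2_eq]; ring

lemma dOm_yxz (w : Fin 6 → Fin 6 → ℝ) (X Y Z : V) :
    dOm (form2 w) Y X Z = -dOm (form2 w) X Y Z := by simp only [dOm_eq]; ring
lemma dOm_xzy (w : Fin 6 → Fin 6 → ℝ) (X Y Z : V) :
    dOm (form2 w) X Z Y = -dOm (form2 w) X Y Z := by simp only [dOm_eq]; ring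
lemma dOm_zyx (w : Fin 6 → Fin 6 → ℝ) (X Y Z : V) :
    dOm (form2 w) Z Y X = -dOm (form2 w) X Y Z := by simp only [dOm_eq]; ring
lemma dOm_yzx (w : Fin 6 → Fin 6 → ℝ) (X Y Z : V) :
    dOm (form2 w) Y Z X = dOm (form2 w) X Y Z := by simp only [dOm_eq]; ring
lemma dOm_zxy (w : Fin 6 → Fin 6 → ℝ) (X Y Z : V) :
    dOm (form2 w) Z X Y = dOm (form2 w) X Y Z := by simp only [dOm_eq]; ring


/-- The 10-term pair/triple form of `ω ∧ dω`. -/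
def S10 (w : Fin 6 → Fin 6 → ℝ) (X0 X1 X2 X3 X4 : V) : ℝ :=
  form2 w X0 X1 * dOm (form2 w) X2 X3 X4 - form2 w X0 X2 * dOm (form2 w) X1 X3 X4 + form2 w X0 X3 * dOm (form2 w) X1 X2 X4 - form2 w X0 X4 * dOm (form2 w) X1 X2 X3 + form2 w X1 X2 * dOm (form2 w) X0 X3 X4 - form2 w X1 X3 * dOm (form2 w) X0 X2 X4 + form2 w X1 X4 * dOm (form2 w) X0 X2 X3 + form2 w X2 X3 * dOm (form2 w) X0 X1 X4 - form2 w X2 X4 * dOm (form2 w) X0 X1 X3 + form2 w X3 X4 * dOm (form2 w) X0 X1 X2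


lemma form2_addL (w : Fin 6 → Fin 6 → ℝ) (X X' Y : V) :
    form2 w (X + X') Y = form2 w X Y + form2 w X' Y := by
  simp only [form2_eq, Pi.add_apply]; ring
lemma form2_addR (w : Fin 6 → Fin 6 → ℝ) (X Y Y' : V) :
    form2 w X (Y + Y') = form2 w X Y + form2 w X Y' := by
  simp only [form2_eq, Pi.add_apply]; ring
lemma form2_smulL (w : Fin 6 → Fin 6 → ℝ) (r : ℝ) (X Y : V) :
    form2 w (r • X) Y = r * form2 w X Y := by
  simp only [form2_eq, Pi.smul_apply, smul_eq_mul]; ring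
lemma form2_smulR (w : Fin 6 → Fin 6 → ℝ) (r : ℝ) (X Y : V) :
    form2 w X (r • Y) = r * form2 w X Y := by
  simp only [form2_eq, Pi.smul_apply, smul_eq_mul]; ring
lemma dOm_add1 (w : Fin 6 → Fin 6 → ℝ) (X X' Y Z : V) :
    dOm (form2 w) (X + X') Y Z = dOm (form2 w) X Y Z + dOm (form2 w) X' Y Z := by
  simp only [dOm_eq, Pi.add_apply]; ring
lemma dOm_add2 (w : Fin 6 → Fin 6 → ℝ) (X Y Y' Z : V) :
    dOm (form2 w) X (Y + Y') Z = dOm (form2 w) X Y Z + dOm (form2 w) X Y' Z := by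
  simp only [dOm_eq, Pi.add_apply]; ring
lemma dOm_add3 (w : Fin 6 → Fin 6 → ℝ) (X Y Z Z' : V) :
    dOm (form2 w) X Y (Z + Z') = dOm (form2 w) X Y Z + dOm (form2 w) X Y Z' := by
  simp only [dOm_eq, Pi.add_apply]; ring
lemma dOm_smul1 (w : Fin 6 → Fin 6 → ℝ) (r : ℝ) (X Y Z : V) :
    dOm (form2 w) (r • X) Y Z = r * dOm (form2 w) X Y Z := by
  simp only [dOm_eq, Pi.smul_apply, smul_eq_mul]; ring
lemma dOm_smul2 (w : Fin 6 → Fin 6 → ℝ) (r : ℝ) (X Y Z : V) :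
    dOm (form2 w) X (r • Y) Z = r * dOm (form2 w) X Y Z := by
  simp only [dOm_eq, Pi.smul_apply, smul_eq_mul]; ring
lemma dOm_smul3 (w : Fin 6 → Fin 6 → ℝ) (r : ℝ) (X Y Z : V) :
    dOm (form2 w) X Y (r • Z) = r * dOm (form2 w) X Y Z := by
  simp only [dOm_eq, Pi.smul_apply, smul_eq_mul]; ring

lemma S10_add3 (w : Fin 6 → Fin 6 → ℝ) (X0 X1 X2 U U' Y : V) :
    S10 w X0 X1 X2 (U + U') Y = S10 w X0 X1 X2 U Y + S10 w X0 X1 X2 U' Y := by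
  simp only [S10, form2_addL, form2_addR, dOm_add1, dOm_add2, dOm_add3]; ring
lemma S10_smul3 (w : Fin 6 → Fin 6 → ℝ) (X0 X1 X2 : V) (r : ℝ) (U Y : V) :
    S10 w X0 X1 X2 (r • U) Y = r * S10 w X0 X1 X2 U Y := by
  simp only [S10, form2_smulL, form2_smulR, dOm_smul1, dOm_smul2, dOm_smul3]; ring
lemma S10_add4 (w : Fin 6 → Fin 6 → ℝ) (X0 X1 X2 X3 U U' : V) :
    S10 w X0 X1 X2 X3 (U + U') = S10 w X0 X1 X2 X3 U + S10 w X0 X1 X2 X3 U' := by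
  simp only [S10, form2_addL, form2_addR, dOm_add1, dOm_add2, dOm_add3]; ring
lemma S10_smul4 (w : Fin 6 → Fin 6 → ℝ) (X0 X1 X2 X3 : V) (r : ℝ) (U : V) :
    S10 w X0 X1 X2 X3 (r • U) = r * S10 w X0 X1 X2 X3 U := by
  simp only [S10, form2_smulL, form2_smulR, dOm_smul1, dOm_smul2, dOm_smul3]; ring

lemma vec_expand (Y : V) :
    Y 0 • e 0 + Y 1 • e 1 + Y 2 • e 2 + Y 3 • e 3 + Y 4 • e 4 + Y 5 • e 5 = Y := by
  funext j
  fin_cases j <;> simp [e, Pi.single_apply]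


lemma S10_basis (w : Fin 6 → Fin 6 → ℝ) (X0 X1 X2 : V) (U Y : Fin 6 → ℝ) :
    S10 w X0 X1 X2 (U 0 • e 0 + U 1 • e 1 + U 2 • e 2 + U 3 • e 3 + U 4 • e 4 + U 5 • e 5) (Y 0 • e 0 + Y 1 • e 1 + Y 2 • e 2 + Y 3 • e 3 + Y 4 • e 4 + Y 5 • e 5) =
      U 0 * (Y 0 * S10 w X0 X1 X2 (e 0) (e 0)) + U 0 * (Y 1 * S10 w X0 X1 X2 (e 0) (e 1)) + U 0 * (Y 2 * S10 w X0 X1 X2 (e 0) (e 2)) + U 0 * (Y 3 * S10 w X0 X1 X2 (e 0) (e 3)) + U 0 * (Y 4 * S10 w X0 X1 X2 (e 0) (e 4)) + U 0 * (Y 5 * S10 w X0 X1 X2 (e 0) (e 5)) + U 1 * (Y 0 * S10 w X0 X1 X2 (e 1) (e 0)) + U 1 * (Y 1 * S10 w X0 X1 X2 (e 1) (e 1)) + U 1 * (Y 2 * S10 w X0 X1 X2 (e 1) (e 2)) + U 1 * (Y 3 * S10 w X0 X1 X2 (e 1) (e 3)) + U 1 * (Y 4 * S10 w X0 X1 X2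 (e 1) (e 4)) + U 1 * (Y 5 * S10 w X0 X1 X2 (e 1) (e 5)) + U 2 * (Y 0 * S10 w X0 X1 X2 (e 2) (e 0)) + U 2 * (Y 1 * S10 w X0 X1 X2 (e 2) (e 1)) + U 2 * (Y 2 * S10 w X0 X1 X2 (e 2) (e 2)) + U 2 * (Y 3 * S10 w X0 X1 X2 (e 2) (e 3)) + U 2 * (Y 4 * S10 w X0 X1 X2 (e 2) (e 4)) + U 2 * (Y 5 * S10 w X0 X1 X2 (e 2) (e 5)) + U 3 * (Y 0 * S10 w X0 X1 X2 (e 3) (e 0)) + U 3 * (Y 1 * S10 w X0 X1 X2 (e 3) (e 1)) + U 3 * (Y 2 * S10 w X0 X1 X2 (e 3) (e 2)) + U 3 * (Y 3 * S10 w X0 X1 X2 (e 3) (e 3)) + U 3 * (Y 4 * S10 w X0 X1 X2 (e 3) (e 4)) + U 3 * (Y 5 * S10 w X0 X1 X2 (e 3) (e 5)) + U 4 * (Y 0 * S10 w X0 X1 X2 (e 4) (e 0)) + U 4 * (Y 1 * S10 w X0 X1 X2 (e 4) (e 1)) + U 4 * (Y 2 * S10 w X0 X1 X2 (e 4) (e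 2)) + U 4 * (Y 3 * S10 w X0 X1 X2 (e 4) (e 3)) + U 4 * (Y 4 * S10 w X0 X1 X2 (e 4) (e 4)) + U 4 * (Y 5 * S10 w X0 X1 X2 (e 4) (e 5)) + U 5 * (Y 0 * S10 w X0 X1 X2 (e 5) (e 0)) + U 5 * (Y 1 * S10 w X0 X1 X2 (e 5) (e 1)) + U 5 * (Y 2 * S10 w X0 X1 X2 (e 5) (e 2)) + U 5 * (Y 3 * S10 w X0 X1 X2 (e 5) (e 3)) + U 5 * (Y 4 * S10 w X0 X1 X2 (e 5) (e 4)) + U 5 * (Y 5 * S10 w X0 X1 X2 (e 5) (e 5)) := by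
  simp only [S10_add3, S10_smul3, S10_add4, S10_smul4]
  ring

lemma S10_expand34 (w : Fin 6 → Fin 6 → ℝ) (X0 X1 X2 X3 X4 : V) :
    S10 w X0 X1 X2 X3 X4 =
      X3 0 * (X4 0 * S10 w X0 X1 X2 (e 0) (e 0)) + X3 0 * (X4 1 * S10 w X0 X1 X2 (e 0) (e 1)) + X3 0 * (X4 2 * S10 w X0 X1 X2 (e 0) (e 2)) + X3 0 * (X4 3 * S10 w X0 X1 X2 (e 0) (e 3)) + X3 0 * (X4 4 * S10 w X0 X1 X2 (e 0) (e 4)) + X3 0 * (X4 5 * S10 w X0 X1 X2 (e 0) (e 5)) + X3 1 * (X4 0 * S10 w X0 X1 X2 (e 1) (e 0)) + X3 1 * (X4 1 * S10 w X0 X1 X2 (e 1) (e 1)) + X3 1 * (X4 2 * S10 w X0 X1 X2 (e 1) (e 2)) + X3 1 * (X4 3 * S10 w X0 X1 X2 (e 1) (e 3)) + X3 1 * (X4 4 * S10 w X0 X1 X2 (e 1) (e 4)) + X3 1 * (X4 5 * S10 w X0 X1 X2 (e 1) (e 5)) + X3 2 * (X4 0 * S10 w X0 X1 X2 (e 2)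 (e 0)) + X3 2 * (X4 1 * S10 w X0 X1 X2 (e 2) (e 1)) + X3 2 * (X4 2 * S10 w X0 X1 X2 (e 2) (e 2)) + X3 2 * (X4 3 * S10 w X0 X1 X2 (e 2) (e 3)) + X3 2 * (X4 4 * S10 w X0 X1 X2 (e 2) (e 4)) + X3 2 * (X4 5 * S10 w X0 X1 X2 (e 2) (e 5)) + X3 3 * (X4 0 * S10 w X0 X1 X2 (e 3) (e 0)) + X3 3 * (X4 1 * S10 w X0 X1 X2 (e 3) (e 1)) + X3 3 * (X4 2 * S10 w X0 X1 X2 (e 3) (e 2)) + X3 3 * (X4 3 * S10 w X0 X1 X2 (e 3) (e 3)) + X3 3 * (X4 4 * S10 w X0 X1 X2 (e 3) (e 4)) + X3 3 * (X4 5 * S10 w X0 X1 X2 (e 3) (e 5)) + X3 4 * (X4 0 * S10 w X0 X1 X2 (e 4) (e 0)) + X3 4 * (X4 1 * S10 w X0 X1 X2 (e 4) (e 1)) + X3 4 * (X4 2 * S10 w X0 X1 X2 (e 4) (e 2)) + X3 4 * (X4 3 * S10 w X0 X1 X2 (e 4) (e 3)) + X3 4 * (X4 4 * S10 w X0 X1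 X2 (e 4) (e 4)) + X3 4 * (X4 5 * S10 w X0 X1 X2 (e 4) (e 5)) + X3 5 * (X4 0 * S10 w X0 X1 X2 (e 5) (e 0)) + X3 5 * (X4 1 * S10 w X0 X1 X2 (e 5) (e 1)) + X3 5 * (X4 2 * S10 w X0 X1 X2 (e 5) (e 2)) + X3 5 * (X4 3 * S10 w X0 X1 X2 (e 5) (e 3)) + X3 5 * (X4 4 * S10 w X0 X1 X2 (e 5) (e 4)) + X3 5 * (X4 5 * S10 w X0 X1 X2 (e 5) (e 5)) := by
  conv_lhs => rw [← vec_expand X3, ← vec_expand X4]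
  exact S10_basis w X0 X1 X2 X3 X4


lemma leaf_0_0 (w : Fin 6 → Fin 6 → ℝ) (X0 X1 X2 : V)
    (h1 : -(w 1 3) * w 4 5 + w 1 4 * w 3 5 - w 1 5 * w 3 4 = 0) (h2 : -(w 0 3) * w 4 5 + w 0 4 * w 3 5 - w 0 5 * w 3 4 = 0) (h3 : w 0 2 * w 3 5 - w 0 3 * w 2 5 + w 0 5 * w 2 3 + w 1 2 * w 4 5 - w 1 4 * w 2 5 + w 1 5 * w 2 4 = 0) :
    S10 w X0 X1 X2 (e 0) (e 0) = 0 := by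
  simp only [S10, dOm_eq, form2_eq, e_apply, Fin.reduceEq, reduceIte]
  linear_combination (0:ℝ) * h1


lemma leaf_0_1 (w : Fin 6 → Fin 6 → ℝ) (X0 X1 X2 : V)
    (h1 : -(w 1 3) * w 4 5 + w 1 4 * w 3 5 - w 1 5 * w 3 4 = 0) (h2 : -(w 0 3) * w 4 5 + w 0 4 * w 3 5 - w 0 5 * w 3 4 = 0) (h3 : w 0 2 * w 3 5 - w 0 3 * w 2 5 + w 0 5 * w 2 3 + w 1 2 * w 4 5 - w 1 4 * w 2 5 + w 1 5 * w 2 4 = 0) :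
    S10 w X0 X1 X2 (e 0) (e 1) = 0 := by
  simp only [S10, dOm_eq, form2_eq, e_apply, Fin.reduceEq, reduceIte]
  linear_combination (X0 2*X1 4*X2 5 - X0 2*X1 5*X2 4 - X0 4*X1 2*X2 5 + X0 4*X1 5*X2 2 + X0 5*X1 2*X2 4 - X0 5*X1 4*X2 2) * h1 + (X0 2*X1 3*X2 5 - X0 2*X1 5*X2 3 - X0 3*X1 2*X2 5 + X0 3*X1 5*X2 2 + X0 5*X1 2*X2 3 - X0 5*X1 3*X2 2) * h2 + (X0 2*X1 3*X2 4 - X0 2*X1 4*X2 3 - X0 3*X1 2*X2 4 + X0 3*X1 4*X2 2 + X0 4*X1 2*X2 3 - X0 4*X1 3*X2 2) * h3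


lemma leaf_0_2 (w : Fin 6 → Fin 6 → ℝ) (X0 X1 X2 : V)
    (h1 : -(w 1 3) * w 4 5 + w 1 4 * w 3 5 - w 1 5 * w 3 4 = 0) (h2 : -(w 0 3) * w 4 5 + w 0 4 * w 3 5 - w 0 5 * w 3 4 = 0) (h3 : w 0 2 * w 3 5 - w 0 3 * w 2 5 + w 0 5 * w 2 3 + w 1 2 * w 4 5 - w 1 4 * w 2 5 + w 1 5 * w 2 4 = 0) :
    S10 w X0 X1 X2 (e 0) (e 2) = 0 := by
  simp only [S10, dOm_eq, form2_eq, e_apply, Fin.reduceEq, reduceIte]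
  linear_combination (- X0 1*X1 4*X2 5 + X0 1*X1 5*X2 4 + X0 4*X1 1*X2 5 - X0 4*X1 5*X2 1 - X0 5*X1 1*X2 4 + X0 5*X1 4*X2 1) * h1 + (- X0 1*X1 3*X2 5 + X0 1*X1 5*X2 3 + X0 3*X1 1*X2 5 - X0 3*X1 5*X2 1 - X0 5*X1 1*X2 3 + X0 5*X1 3*X2 1) * h2 + (- X0 1*X1 3*X2 4 + X0 1*X1 4*X2 3 + X0 3*X1 1*X2 4 - X0 3*X1 4*X2 1 - X0 4*X1 1*X2 3 + X0 4*X1 3*X2 1) * h3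


lemma leaf_0_3 (w : Fin 6 → Fin 6 → ℝ) (X0 X1 X2 : V)
    (h1 : -(w 1 3) * w 4 5 + w 1 4 * w 3 5 - w 1 5 * w 3 4 = 0) (h2 : -(w 0 3) * w 4 5 + w 0 4 * w 3 5 - w 0 5 * w 3 4 = 0) (h3 : w 0 2 * w 3 5 - w 0 3 * w 2 5 + w 0 5 * w 2 3 + w 1 2 * w 4 5 - w 1 4 * w 2 5 + w 1 5 * w 2 4 = 0) :
    S10 w X0 X1 X2 (e 0) (e 3) = 0 := by
  simp only [S10, dOm_eq, form2_eq, e_apply, Fin.reduceEq, reduceIte]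
  linear_combination (X0 1*X1 2*X2 5 - X0 1*X1 5*X2 2 - X0 2*X1 1*X2 5 + X0 2*X1 5*X2 1 + X0 5*X1 1*X2 2 - X0 5*X1 2*X2 1) * h2 + (X0 1*X1 2*X2 4 - X0 1*X1 4*X2 2 - X0 2*X1 1*X2 4 + X0 2*X1 4*X2 1 + X0 4*X1 1*X2 2 - X0 4*X1 2*X2 1) * h3


lemma leaf_0_4 (w : Fin 6 → Fin 6 → ℝ) (X0 X1 X2 : V)
    (h1 : -(w 1 3) * w 4 5 + w 1 4 * w 3 5 - w 1 5 * w 3 4 = 0) (h2 : -(w 0 3) * w 4 5 + w 0 4 * w 3 5 - w 0 5 * w 3 4 = 0) (h3 : w 0 2 * w 3 5 - w 0 3 * w 2 5 + w 0 5 * w 2 3 + w 1 2 * w 4 5 - w 1 4 * w 2 5 + w 1 5 * w 2 4 = 0) :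
    S10 w X0 X1 X2 (e 0) (e 4) = 0 := by
  simp only [S10, dOm_eq, form2_eq, e_apply, Fin.reduceEq, reduceIte]
  linear_combination (X0 1*X1 2*X2 5 - X0 1*X1 5*X2 2 - X0 2*X1 1*X2 5 + X0 2*X1 5*X2 1 + X0 5*X1 1*X2 2 - X0 5*X1 2*X2 1) * h1 + (- X0 1*X1 2*X2 3 + X0 1*X1 3*X2 2 + X0 2*X1 1*X2 3 - X0 2*X1 3*X2 1 - X0 3*X1 1*X2 2 + X0 3*X1 2*X2 1) * h3


lemma leaf_0_5 (w : Fin 6 → Fin 6 → ℝ) (X0 X1 X2 : V)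
    (h1 : -(w 1 3) * w 4 5 + w 1 4 * w 3 5 - w 1 5 * w 3 4 = 0) (h2 : -(w 0 3) * w 4 5 + w 0 4 * w 3 5 - w 0 5 * w 3 4 = 0) (h3 : w 0 2 * w 3 5 - w 0 3 * w 2 5 + w 0 5 * w 2 3 + w 1 2 * w 4 5 - w 1 4 * w 2 5 + w 1 5 * w 2 4 = 0) :
    S10 w X0 X1 X2 (e 0) (e 5) = 0 := by
  simp only [S10, dOm_eq, form2_eq, e_apply, Fin.reduceEq, reduceIte]
  linear_combination (- X0 1*X1 2*X2 4 + X0 1*X1 4*X2 2 + X0 2*X1 1*X2 4 - X0 2*X1 4*X2 1 - X0 4*X1 1*X2 2 + X0 4*X1 2*X2 1) * h1 + (- X0 1*X1 2*X2 3 + X0 1*X1 3*X2 2 + X0 2*X1 1*X2 3 - X0 2*X1 3*X2 1 - X0 3*X1 1*X2 2 + X0 3*X1 2*X2 1) * h2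


lemma leaf_1_0 (w : Fin 6 → Fin 6 → ℝ) (X0 X1 X2 : V)
    (h1 : -(w 1 3) * w 4 5 + w 1 4 * w 3 5 - w 1 5 * w 3 4 = 0) (h2 : -(w 0 3) * w 4 5 + w 0 4 * w 3 5 - w 0 5 * w 3 4 = 0) (h3 : w 0 2 * w 3 5 - w 0 3 * w 2 5 + w 0 5 * w 2 3 + w 1 2 * w 4 5 - w 1 4 * w 2 5 + w 1 5 * w 2 4 = 0) :
    S10 w X0 X1 X2 (e 1) (e 0) = 0 := by
  simp only [S10, dOm_eq, form2_eq, e_apply, Fin.reduceEq, reduceIte]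
  linear_combination (- X0 2*X1 4*X2 5 + X0 2*X1 5*X2 4 + X0 4*X1 2*X2 5 - X0 4*X1 5*X2 2 - X0 5*X1 2*X2 4 + X0 5*X1 4*X2 2) * h1 + (- X0 2*X1 3*X2 5 + X0 2*X1 5*X2 3 + X0 3*X1 2*X2 5 - X0 3*X1 5*X2 2 - X0 5*X1 2*X2 3 + X0 5*X1 3*X2 2) * h2 + (- X0 2*X1 3*X2 4 + X0 2*X1 4*X2 3 + X0 3*X1 2*X2 4 - X0 3*X1 4*X2 2 - X0 4*X1 2*X2 3 + X0 4*X1 3*X2 2) * h3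


lemma leaf_1_1 (w : Fin 6 → Fin 6 → ℝ) (X0 X1 X2 : V)
    (h1 : -(w 1 3) * w 4 5 + w 1 4 * w 3 5 - w 1 5 * w 3 4 = 0) (h2 : -(w 0 3) * w 4 5 + w 0 4 * w 3 5 - w 0 5 * w 3 4 = 0) (h3 : w 0 2 * w 3 5 - w 0 3 * w 2 5 + w 0 5 * w 2 3 + w 1 2 * w 4 5 - w 1 4 * w 2 5 + w 1 5 * w 2 4 = 0) :
    S10 w X0 X1 X2 (e 1) (e 1) = 0 := by
  simp only [S10, dOm_eq, form2_eq, e_apply, Fin.reduceEq, reduceIte]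
  linear_combination (0:ℝ) * h1


lemma leaf_1_2 (w : Fin 6 → Fin 6 → ℝ) (X0 X1 X2 : V)
    (h1 : -(w 1 3) * w 4 5 + w 1 4 * w 3 5 - w 1 5 * w 3 4 = 0) (h2 : -(w 0 3) * w 4 5 + w 0 4 * w 3 5 - w 0 5 * w 3 4 = 0) (h3 : w 0 2 * w 3 5 - w 0 3 * w 2 5 + w 0 5 * w 2 3 + w 1 2 * w 4 5 - w 1 4 * w 2 5 + w 1 5 * w 2 4 = 0) :
    S10 w X0 X1 X2 (e 1) (e 2) = 0 := by
  simp only [S10, dOm_eq, form2_eq, e_apply, Fin.reduceEq, reduceIte]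
  linear_combination (X0 0*X1 4*X2 5 - X0 0*X1 5*X2 4 - X0 4*X1 0*X2 5 + X0 4*X1 5*X2 0 + X0 5*X1 0*X2 4 - X0 5*X1 4*X2 0) * h1 + (X0 0*X1 3*X2 5 - X0 0*X1 5*X2 3 - X0 3*X1 0*X2 5 + X0 3*X1 5*X2 0 + X0 5*X1 0*X2 3 - X0 5*X1 3*X2 0) * h2 + (X0 0*X1 3*X2 4 - X0 0*X1 4*X2 3 - X0 3*X1 0*X2 4 + X0 3*X1 4*X2 0 + X0 4*X1 0*X2 3 - X0 4*X1 3*X2 0) * h3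


lemma leaf_1_3 (w : Fin 6 → Fin 6 → ℝ) (X0 X1 X2 : V)
    (h1 : -(w 1 3) * w 4 5 + w 1 4 * w 3 5 - w 1 5 * w 3 4 = 0) (h2 : -(w 0 3) * w 4 5 + w 0 4 * w 3 5 - w 0 5 * w 3 4 = 0) (h3 : w 0 2 * w 3 5 - w 0 3 * w 2 5 + w 0 5 * w 2 3 + w 1 2 * w 4 5 - w 1 4 * w 2 5 + w 1 5 * w 2 4 = 0) :
    S10 w X0 X1 X2 (e 1) (e 3) = 0 := by
  simp only [S10, dOm_eq, form2_eq, e_apply, Fin.reduceEq, reduceIte]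
  linear_combination (- X0 0*X1 2*X2 5 + X0 0*X1 5*X2 2 + X0 2*X1 0*X2 5 - X0 2*X1 5*X2 0 - X0 5*X1 0*X2 2 + X0 5*X1 2*X2 0) * h2 + (- X0 0*X1 2*X2 4 + X0 0*X1 4*X2 2 + X0 2*X1 0*X2 4 - X0 2*X1 4*X2 0 - X0 4*X1 0*X2 2 + X0 4*X1 2*X2 0) * h3


lemma leaf_1_4 (w : Fin 6 → Fin 6 → ℝ) (X0 X1 X2 : V)
    (h1 : -(w 1 3) * w 4 5 + w 1 4 * w 3 5 - w 1 5 * w 3 4 = 0) (h2 : -(w 0 3) * w 4 5 + w 0 4 * w 3 5 - w 0 5 * w 3 4 = 0) (h3 : w 0 2 * w 3 5 - w 0 3 * w 2 5 + w 0 5 * w 2 3 + w 1 2 * w 4 5 - w 1 4 * w 2 5 + w 1 5 * w 2 4 = 0) :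
    S10 w X0 X1 X2 (e 1) (e 4) = 0 := by
  simp only [S10, dOm_eq, form2_eq, e_apply, Fin.reduceEq, reduceIte]
  linear_combination (- X0 0*X1 2*X2 5 + X0 0*X1 5*X2 2 + X0 2*X1 0*X2 5 - X0 2*X1 5*X2 0 - X0 5*X1 0*X2 2 + X0 5*X1 2*X2 0) * h1 + (X0 0*X1 2*X2 3 - X0 0*X1 3*X2 2 - X0 2*X1 0*X2 3 + X0 2*X1 3*X2 0 + X0 3*X1 0*X2 2 - X0 3*X1 2*X2 0) * h3


lemma leaf_1_5 (w : Fin 6 → Fin 6 → ℝ) (X0 X1 X2 : V)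
    (h1 : -(w 1 3) * w 4 5 + w 1 4 * w 3 5 - w 1 5 * w 3 4 = 0) (h2 : -(w 0 3) * w 4 5 + w 0 4 * w 3 5 - w 0 5 * w 3 4 = 0) (h3 : w 0 2 * w 3 5 - w 0 3 * w 2 5 + w 0 5 * w 2 3 + w 1 2 * w 4 5 - w 1 4 * w 2 5 + w 1 5 * w 2 4 = 0) :
    S10 w X0 X1 X2 (e 1) (e 5) = 0 := by
  simp only [S10, dOm_eq, form2_eq, e_apply, Fin.reduceEq, reduceIte]
  linear_combination (X0 0*X1 2*X2 4 - X0 0*X1 4*X2 2 - X0 2*X1 0*X2 4 + X0 2*X1 4*X2 0 + X0 4*X1 0*X2 2 - X0 4*X1 2*X2 0) * h1 + (X0 0*X1 2*X2 3 - X0 0*X1 3*X2 2 - X0 2*X1 0*X2 3 + X0 2*X1 3*X2 0 + X0 3*X1 0*X2 2 - X0 3*X1 2*X2 0) * h2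


lemma leaf_2_0 (w : Fin 6 → Fin 6 → ℝ) (X0 X1 X2 : V)
    (h1 : -(w 1 3) * w 4 5 + w 1 4 * w 3 5 - w 1 5 * w 3 4 = 0) (h2 : -(w 0 3) * w 4 5 + w 0 4 * w 3 5 - w 0 5 * w 3 4 = 0) (h3 : w 0 2 * w 3 5 - w 0 3 * w 2 5 + w 0 5 * w 2 3 + w 1 2 * w 4 5 - w 1 4 * w 2 5 + w 1 5 * w 2 4 = 0) :
    S10 w X0 X1 X2 (e 2) (e 0) = 0 := by
  simp only [S10, dOm_eq, form2_eq, e_apply, Fin.reduceEq, reduceIte]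
  linear_combination (X0 1*X1 4*X2 5 - X0 1*X1 5*X2 4 - X0 4*X1 1*X2 5 + X0 4*X1 5*X2 1 + X0 5*X1 1*X2 4 - X0 5*X1 4*X2 1) * h1 + (X0 1*X1 3*X2 5 - X0 1*X1 5*X2 3 - X0 3*X1 1*X2 5 + X0 3*X1 5*X2 1 + X0 5*X1 1*X2 3 - X0 5*X1 3*X2 1) * h2 + (X0 1*X1 3*X2 4 - X0 1*X1 4*X2 3 - X0 3*X1 1*X2 4 + X0 3*X1 4*X2 1 + X0 4*X1 1*X2 3 - X0 4*X1 3*X2 1) * h3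


lemma leaf_2_1 (w : Fin 6 → Fin 6 → ℝ) (X0 X1 X2 : V)
    (h1 : -(w 1 3) * w 4 5 + w 1 4 * w 3 5 - w 1 5 * w 3 4 = 0) (h2 : -(w 0 3) * w 4 5 + w 0 4 * w 3 5 - w 0 5 * w 3 4 = 0) (h3 : w 0 2 * w 3 5 - w 0 3 * w 2 5 + w 0 5 * w 2 3 + w 1 2 * w 4 5 - w 1 4 * w 2 5 + w 1 5 * w 2 4 = 0) :
    S10 w X0 X1 X2 (e 2) (e 1) = 0 := by
  simp only [S10, dOm_eq, form2_eq, e_apply, Fin.reduceEq, reduceIte]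
  linear_combination (- X0 0*X1 4*X2 5 + X0 0*X1 5*X2 4 + X0 4*X1 0*X2 5 - X0 4*X1 5*X2 0 - X0 5*X1 0*X2 4 + X0 5*X1 4*X2 0) * h1 + (- X0 0*X1 3*X2 5 + X0 0*X1 5*X2 3 + X0 3*X1 0*X2 5 - X0 3*X1 5*X2 0 - X0 5*X1 0*X2 3 + X0 5*X1 3*X2 0) * h2 + (- X0 0*X1 3*X2 4 + X0 0*X1 4*X2 3 + X0 3*X1 0*X2 4 - X0 3*X1 4*X2 0 - X0 4*X1 0*X2 3 + X0 4*X1 3*X2 0) * h3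


lemma leaf_2_2 (w : Fin 6 → Fin 6 → ℝ) (X0 X1 X2 : V)
    (h1 : -(w 1 3) * w 4 5 + w 1 4 * w 3 5 - w 1 5 * w 3 4 = 0) (h2 : -(w 0 3) * w 4 5 + w 0 4 * w 3 5 - w 0 5 * w 3 4 = 0) (h3 : w 0 2 * w 3 5 - w 0 3 * w 2 5 + w 0 5 * w 2 3 + w 1 2 * w 4 5 - w 1 4 * w 2 5 + w 1 5 * w 2 4 = 0) :
    S10 w X0 X1 X2 (e 2) (e 2) = 0 := by
  simp only [S10, dOm_eq, form2_eq, e_apply, Fin.reduceEq, reduceIte]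
  linear_combination (0:ℝ) * h1


lemma leaf_2_3 (w : Fin 6 → Fin 6 → ℝ) (X0 X1 X2 : V)
    (h1 : -(w 1 3) * w 4 5 + w 1 4 * w 3 5 - w 1 5 * w 3 4 = 0) (h2 : -(w 0 3) * w 4 5 + w 0 4 * w 3 5 - w 0 5 * w 3 4 = 0) (h3 : w 0 2 * w 3 5 - w 0 3 * w 2 5 + w 0 5 * w 2 3 + w 1 2 * w 4 5 - w 1 4 * w 2 5 + w 1 5 * w 2 4 = 0) :
    S10 w X0 X1 X2 (e 2) (e 3) = 0 := by
  simp only [S10, dOm_eq, form2_eq, e_apply, Fin.reduceEq, reduceIte]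
  linear_combination (X0 0*X1 1*X2 5 - X0 0*X1 5*X2 1 - X0 1*X1 0*X2 5 + X0 1*X1 5*X2 0 + X0 5*X1 0*X2 1 - X0 5*X1 1*X2 0) * h2 + (X0 0*X1 1*X2 4 - X0 0*X1 4*X2 1 - X0 1*X1 0*X2 4 + X0 1*X1 4*X2 0 + X0 4*X1 0*X2 1 - X0 4*X1 1*X2 0) * h3


lemma leaf_2_4 (w : Fin 6 → Fin 6 → ℝ) (X0 X1 X2 : V)
    (h1 : -(w 1 3) * w 4 5 + w 1 4 * w 3 5 - w 1 5 * w 3 4 = 0) (h2 : -(w 0 3) * w 4 5 + w 0 4 * w 3 5 - w 0 5 * w 3 4 = 0) (h3 : w 0 2 * w 3 5 - w 0 3 * w 2 5 + w 0 5 * w 2 3 + w 1 2 * w 4 5 - w 1 4 * w 2 5 + w 1 5 * w 2 4 = 0) :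
    S10 w X0 X1 X2 (e 2) (e 4) = 0 := by
  simp only [S10, dOm_eq, form2_eq, e_apply, Fin.reduceEq, reduceIte]
  linear_combination (X0 0*X1 1*X2 5 - X0 0*X1 5*X2 1 - X0 1*X1 0*X2 5 + X0 1*X1 5*X2 0 + X0 5*X1 0*X2 1 - X0 5*X1 1*X2 0) * h1 + (- X0 0*X1 1*X2 3 + X0 0*X1 3*X2 1 + X0 1*X1 0*X2 3 - X0 1*X1 3*X2 0 - X0 3*X1 0*X2 1 + X0 3*X1 1*X2 0) * h3


lemma leaf_2_5 (w : Fin 6 → Fin 6 → ℝ) (X0 X1 X2 : V)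
    (h1 : -(w 1 3) * w 4 5 + w 1 4 * w 3 5 - w 1 5 * w 3 4 = 0) (h2 : -(w 0 3) * w 4 5 + w 0 4 * w 3 5 - w 0 5 * w 3 4 = 0) (h3 : w 0 2 * w 3 5 - w 0 3 * w 2 5 + w 0 5 * w 2 3 + w 1 2 * w 4 5 - w 1 4 * w 2 5 + w 1 5 * w 2 4 = 0) :
    S10 w X0 X1 X2 (e 2) (e 5) = 0 := by
  simp only [S10, dOm_eq, form2_eq, e_apply, Fin.reduceEq, reduceIte]
  linear_combination (- X0 0*X1 1*X2 4 + X0 0*X1 4*X2 1 + X0 1*X1 0*X2 4 - X0 1*X1 4*X2 0 - X0 4*X1 0*X2 1 + X0 4*X1 1*X2 0) * h1 + (- X0 0*X1 1*X2 3 + X0 0*X1 3*X2 1 + X0 1*X1 0*X2 3 - X0 1*X1 3*X2 0 - X0 3*X1 0*X2 1 + X0 3*X1 1*X2 0) * h2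


lemma leaf_3_0 (w : Fin 6 → Fin 6 → ℝ) (X0 X1 X2 : V)
    (h1 : -(w 1 3) * w 4 5 + w 1 4 * w 3 5 - w 1 5 * w 3 4 = 0) (h2 : -(w 0 3) * w 4 5 + w 0 4 * w 3 5 - w 0 5 * w 3 4 = 0) (h3 : w 0 2 * w 3 5 - w 0 3 * w 2 5 + w 0 5 * w 2 3 + w 1 2 * w 4 5 - w 1 4 * w 2 5 + w 1 5 * w 2 4 = 0) :
    S10 w X0 X1 X2 (e 3) (e 0) = 0 := by
  simp only [S10, dOm_eq, form2_eq, e_apply, Fin.reduceEq, reduceIte]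
  linear_combination (- X0 1*X1 2*X2 5 + X0 1*X1 5*X2 2 + X0 2*X1 1*X2 5 - X0 2*X1 5*X2 1 - X0 5*X1 1*X2 2 + X0 5*X1 2*X2 1) * h2 + (- X0 1*X1 2*X2 4 + X0 1*X1 4*X2 2 + X0 2*X1 1*X2 4 - X0 2*X1 4*X2 1 - X0 4*X1 1*X2 2 + X0 4*X1 2*X2 1) * h3


lemma leaf_3_1 (w : Fin 6 → Fin 6 → ℝ) (X0 X1 X2 : V)
    (h1 : -(w 1 3) * w 4 5 + w 1 4 * w 3 5 - w 1 5 * w 3 4 = 0) (h2 : -(w 0 3) * w 4 5 + w 0 4 * w 3 5 - w 0 5 * w 3 4 = 0) (h3 : w 0 2 * w 3 5 - w 0 3 * w 2 5 + w 0 5 * w 2 3 + w 1 2 * w 4 5 - w 1 4 * w 2 5 + w 1 5 * w 2 4 = 0) :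
    S10 w X0 X1 X2 (e 3) (e 1) = 0 := by
  simp only [S10, dOm_eq, form2_eq, e_apply, Fin.reduceEq, reduceIte]
  linear_combination (X0 0*X1 2*X2 5 - X0 0*X1 5*X2 2 - X0 2*X1 0*X2 5 + X0 2*X1 5*X2 0 + X0 5*X1 0*X2 2 - X0 5*X1 2*X2 0) * h2 + (X0 0*X1 2*X2 4 - X0 0*X1 4*X2 2 - X0 2*X1 0*X2 4 + X0 2*X1 4*X2 0 + X0 4*X1 0*X2 2 - X0 4*X1 2*X2 0) * h3


lemma leaf_3_2 (w : Fin 6 → Fin 6 → ℝ) (X0 X1 X2 : V)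
    (h1 : -(w 1 3) * w 4 5 + w 1 4 * w 3 5 - w 1 5 * w 3 4 = 0) (h2 : -(w 0 3) * w 4 5 + w 0 4 * w 3 5 - w 0 5 * w 3 4 = 0) (h3 : w 0 2 * w 3 5 - w 0 3 * w 2 5 + w 0 5 * w 2 3 + w 1 2 * w 4 5 - w 1 4 * w 2 5 + w 1 5 * w 2 4 = 0) :
    S10 w X0 X1 X2 (e 3) (e 2) = 0 := by
  simp only [S10, dOm_eq, form2_eq, e_apply, Fin.reduceEq, reduceIte]
  linear_combination (- X0 0*X1 1*X2 5 + X0 0*X1 5*X2 1 + X0 1*X1 0*X2 5 - X0 1*X1 5*X2 0 - X0 5*X1 0*X2 1 + X0 5*X1 1*X2 0) * h2 + (- X0 0*X1 1*X2 4 + X0 0*X1 4*X2 1 + X0 1*X1 0*X2 4 - X0 1*X1 4*X2 0 - X0 4*X1 0*X2 1 + X0 4*X1 1*X2 0) * h3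


lemma leaf_3_3 (w : Fin 6 → Fin 6 → ℝ) (X0 X1 X2 : V)
    (h1 : -(w 1 3) * w 4 5 + w 1 4 * w 3 5 - w 1 5 * w 3 4 = 0) (h2 : -(w 0 3) * w 4 5 + w 0 4 * w 3 5 - w 0 5 * w 3 4 = 0) (h3 : w 0 2 * w 3 5 - w 0 3 * w 2 5 + w 0 5 * w 2 3 + w 1 2 * w 4 5 - w 1 4 * w 2 5 + w 1 5 * w 2 4 = 0) :
    S10 w X0 X1 X2 (e 3) (e 3) = 0 := by
  simp only [S10, dOm_eq, form2_eq, e_apply, Fin.reduceEq, reduceIte]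
  linear_combination (0:ℝ) * h1


lemma leaf_3_4 (w : Fin 6 → Fin 6 → ℝ) (X0 X1 X2 : V)
    (h1 : -(w 1 3) * w 4 5 + w 1 4 * w 3 5 - w 1 5 * w 3 4 = 0) (h2 : -(w 0 3) * w 4 5 + w 0 4 * w 3 5 - w 0 5 * w 3 4 = 0) (h3 : w 0 2 * w 3 5 - w 0 3 * w 2 5 + w 0 5 * w 2 3 + w 1 2 * w 4 5 - w 1 4 * w 2 5 + w 1 5 * w 2 4 = 0) :
    S10 w X0 X1 X2 (e 3) (e 4) = 0 := by
  simp only [S10, dOm_eq, form2_eq, e_apply, Fin.reduceEq, reduceIte]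
  linear_combination (X0 0*X1 1*X2 2 - X0 0*X1 2*X2 1 - X0 1*X1 0*X2 2 + X0 1*X1 2*X2 0 + X0 2*X1 0*X2 1 - X0 2*X1 1*X2 0) * h3


lemma leaf_3_5 (w : Fin 6 → Fin 6 → ℝ) (X0 X1 X2 : V)
    (h1 : -(w 1 3) * w 4 5 + w 1 4 * w 3 5 - w 1 5 * w 3 4 = 0) (h2 : -(w 0 3) * w 4 5 + w 0 4 * w 3 5 - w 0 5 * w 3 4 = 0) (h3 : w 0 2 * w 3 5 - w 0 3 * w 2 5 + w 0 5 * w 2 3 + w 1 2 * w 4 5 - w 1 4 * w 2 5 + w 1 5 * w 2 4 = 0) :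
    S10 w X0 X1 X2 (e 3) (e 5) = 0 := by
  simp only [S10, dOm_eq, form2_eq, e_apply, Fin.reduceEq, reduceIte]
  linear_combination (X0 0*X1 1*X2 2 - X0 0*X1 2*X2 1 - X0 1*X1 0*X2 2 + X0 1*X1 2*X2 0 + X0 2*X1 0*X2 1 - X0 2*X1 1*X2 0) * h2


lemma leaf_4_0 (w : Fin 6 → Fin 6 → ℝ) (X0 X1 X2 : V)
    (h1 : -(w 1 3) * w 4 5 + w 1 4 * w 3 5 - w 1 5 * w 3 4 = 0) (h2 : -(w 0 3) * w 4 5 + w 0 4 * w 3 5 - w 0 5 * w 3 4 = 0) (h3 : w 0 2 * w 3 5 - w 0 3 * w 2 5 + w 0 5 * w 2 3 + w 1 2 * w 4 5 - w 1 4 * w 2 5 + w 1 5 * w 2 4 = 0) :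
    S10 w X0 X1 X2 (e 4) (e 0) = 0 := by
  simp only [S10, dOm_eq, form2_eq, e_apply, Fin.reduceEq, reduceIte]
  linear_combination (- X0 1*X1 2*X2 5 + X0 1*X1 5*X2 2 + X0 2*X1 1*X2 5 - X0 2*X1 5*X2 1 - X0 5*X1 1*X2 2 + X0 5*X1 2*X2 1) * h1 + (X0 1*X1 2*X2 3 - X0 1*X1 3*X2 2 - X0 2*X1 1*X2 3 + X0 2*X1 3*X2 1 + X0 3*X1 1*X2 2 - X0 3*X1 2*X2 1) * h3


lemma leaf_4_1 (w : Fin 6 → Fin 6 → ℝ) (X0 X1 X2 : V)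
    (h1 : -(w 1 3) * w 4 5 + w 1 4 * w 3 5 - w 1 5 * w 3 4 = 0) (h2 : -(w 0 3) * w 4 5 + w 0 4 * w 3 5 - w 0 5 * w 3 4 = 0) (h3 : w 0 2 * w 3 5 - w 0 3 * w 2 5 + w 0 5 * w 2 3 + w 1 2 * w 4 5 - w 1 4 * w 2 5 + w 1 5 * w 2 4 = 0) :
    S10 w X0 X1 X2 (e 4) (e 1) = 0 := by
  simp only [S10, dOm_eq, form2_eq, e_apply, Fin.reduceEq, reduceIte]
  linear_combination (X0 0*X1 2*X2 5 - X0 0*X1 5*X2 2 - X0 2*X1 0*X2 5 + X0 2*X1 5*X2 0 + X0 5*X1 0*X2 2 - X0 5*X1 2*X2 0) * h1 + (- X0 0*X1 2*X2 3 + X0 0*X1 3*X2 2 + X0 2*X1 0*X2 3 - X0 2*X1 3*X2 0 - X0 3*X1 0*X2 2 + X0 3*X1 2*X2 0) * h3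


lemma leaf_4_2 (w : Fin 6 → Fin 6 → ℝ) (X0 X1 X2 : V)
    (h1 : -(w 1 3) * w 4 5 + w 1 4 * w 3 5 - w 1 5 * w 3 4 = 0) (h2 : -(w 0 3) * w 4 5 + w 0 4 * w 3 5 - w 0 5 * w 3 4 = 0) (h3 : w 0 2 * w 3 5 - w 0 3 * w 2 5 + w 0 5 * w 2 3 + w 1 2 * w 4 5 - w 1 4 * w 2 5 + w 1 5 * w 2 4 = 0) :
    S10 w X0 X1 X2 (e 4) (e 2) = 0 := by
  simp only [S10, dOm_eq, form2_eq, e_apply, Fin.reduceEq, reduceIte]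
  linear_combination (- X0 0*X1 1*X2 5 + X0 0*X1 5*X2 1 + X0 1*X1 0*X2 5 - X0 1*X1 5*X2 0 - X0 5*X1 0*X2 1 + X0 5*X1 1*X2 0) * h1 + (X0 0*X1 1*X2 3 - X0 0*X1 3*X2 1 - X0 1*X1 0*X2 3 + X0 1*X1 3*X2 0 + X0 3*X1 0*X2 1 - X0 3*X1 1*X2 0) * h3


lemma leaf_4_3 (w : Fin 6 → Fin 6 → ℝ) (X0 X1 X2 : V)
    (h1 : -(w 1 3) * w 4 5 + w 1 4 * w 3 5 - w 1 5 * w 3 4 = 0) (h2 : -(w 0 3) * w 4 5 + w 0 4 * w 3 5 - w 0 5 * w 3 4 = 0) (h3 : w 0 2 * w 3 5 - w 0 3 * w 2 5 + w 0 5 * w 2 3 + w 1 2 * w 4 5 - w 1 4 * w 2 5 + w 1 5 * w 2 4 = 0) :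
    S10 w X0 X1 X2 (e 4) (e 3) = 0 := by
  simp only [S10, dOm_eq, form2_eq, e_apply, Fin.reduceEq, reduceIte]
  linear_combination (- X0 0*X1 1*X2 2 + X0 0*X1 2*X2 1 + X0 1*X1 0*X2 2 - X0 1*X1 2*X2 0 - X0 2*X1 0*X2 1 + X0 2*X1 1*X2 0) * h3


lemma leaf_4_4 (w : Fin 6 → Fin 6 → ℝ) (X0 X1 X2 : V)
    (h1 : -(w 1 3) * w 4 5 + w 1 4 * w 3 5 - w 1 5 * w 3 4 = 0) (h2 : -(w 0 3) * w 4 5 + w 0 4 * w 3 5 - w 0 5 * w 3 4 = 0) (h3 : w 0 2 * w 3 5 - w 0 3 * w 2 5 + w 0 5 * w 2 3 + w 1 2 * w 4 5 - w 1 4 * w 2 5 + w 1 5 * w 2 4 = 0) :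
    S10 w X0 X1 X2 (e 4) (e 4) = 0 := by
  simp only [S10, dOm_eq, form2_eq, e_apply, Fin.reduceEq, reduceIte]
  linear_combination (0:ℝ) * h1


lemma leaf_4_5 (w : Fin 6 → Fin 6 → ℝ) (X0 X1 X2 : V)
    (h1 : -(w 1 3) * w 4 5 + w 1 4 * w 3 5 - w 1 5 * w 3 4 = 0) (h2 : -(w 0 3) * w 4 5 + w 0 4 * w 3 5 - w 0 5 * w 3 4 = 0) (h3 : w 0 2 * w 3 5 - w 0 3 * w 2 5 + w 0 5 * w 2 3 + w 1 2 * w 4 5 - w 1 4 * w 2 5 + w 1 5 * w 2 4 = 0) :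
    S10 w X0 X1 X2 (e 4) (e 5) = 0 := by
  simp only [S10, dOm_eq, form2_eq, e_apply, Fin.reduceEq, reduceIte]
  linear_combination (X0 0*X1 1*X2 2 - X0 0*X1 2*X2 1 - X0 1*X1 0*X2 2 + X0 1*X1 2*X2 0 + X0 2*X1 0*X2 1 - X0 2*X1 1*X2 0) * h1


lemma leaf_5_0 (w : Fin 6 → Fin 6 → ℝ) (X0 X1 X2 : V)
    (h1 : -(w 1 3) * w 4 5 + w 1 4 * w 3 5 - w 1 5 * w 3 4 = 0) (h2 : -(w 0 3) * w 4 5 + w 0 4 * w 3 5 - w 0 5 * w 3 4 = 0) (h3 : w 0 2 * w 3 5 - w 0 3 * w 2 5 + w 0 5 * w 2 3 + w 1 2 * w 4 5 - w 1 4 * w 2 5 + w 1 5 * w 2 4 = 0) :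
    S10 w X0 X1 X2 (e 5) (e 0) = 0 := by
  simp only [S10, dOm_eq, form2_eq, e_apply, Fin.reduceEq, reduceIte]
  linear_combination (X0 1*X1 2*X2 4 - X0 1*X1 4*X2 2 - X0 2*X1 1*X2 4 + X0 2*X1 4*X2 1 + X0 4*X1 1*X2 2 - X0 4*X1 2*X2 1) * h1 + (X0 1*X1 2*X2 3 - X0 1*X1 3*X2 2 - X0 2*X1 1*X2 3 + X0 2*X1 3*X2 1 + X0 3*X1 1*X2 2 - X0 3*X1 2*X2 1) * h2


lemma leaf_5_1 (w : Fin 6 → Fin 6 → ℝ) (X0 X1 X2 : V)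
    (h1 : -(w 1 3) * w 4 5 + w 1 4 * w 3 5 - w 1 5 * w 3 4 = 0) (h2 : -(w 0 3) * w 4 5 + w 0 4 * w 3 5 - w 0 5 * w 3 4 = 0) (h3 : w 0 2 * w 3 5 - w 0 3 * w 2 5 + w 0 5 * w 2 3 + w 1 2 * w 4 5 - w 1 4 * w 2 5 + w 1 5 * w 2 4 = 0) :
    S10 w X0 X1 X2 (e 5) (e 1) = 0 := by
  simp only [S10, dOm_eq, form2_eq, e_apply, Fin.reduceEq, reduceIte]
  linear_combination (- X0 0*X1 2*X2 4 + X0 0*X1 4*X2 2 + X0 2*X1 0*X2 4 - X0 2*X1 4*X2 0 - X0 4*X1 0*X2 2 + X0 4*X1 2*X2 0) * h1 + (- X0 0*X1 2*X2 3 + X0 0*X1 3*X2 2 + X0 2*X1 0*X2 3 - X0 2*X1 3*X2 0 - X0 3*X1 0*X2 2 + X0 3*X1 2*X2 0) * h2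


lemma leaf_5_2 (w : Fin 6 → Fin 6 → ℝ) (X0 X1 X2 : V)
    (h1 : -(w 1 3) * w 4 5 + w 1 4 * w 3 5 - w 1 5 * w 3 4 = 0) (h2 : -(w 0 3) * w 4 5 + w 0 4 * w 3 5 - w 0 5 * w 3 4 = 0) (h3 : w 0 2 * w 3 5 - w 0 3 * w 2 5 + w 0 5 * w 2 3 + w 1 2 * w 4 5 - w 1 4 * w 2 5 + w 1 5 * w 2 4 = 0) :
    S10 w X0 X1 X2 (e 5) (e 2) = 0 := by
  simp only [S10, dOm_eq, form2_eq, e_apply, Fin.reduceEq, reduceIte]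
  linear_combination (X0 0*X1 1*X2 4 - X0 0*X1 4*X2 1 - X0 1*X1 0*X2 4 + X0 1*X1 4*X2 0 + X0 4*X1 0*X2 1 - X0 4*X1 1*X2 0) * h1 + (X0 0*X1 1*X2 3 - X0 0*X1 3*X2 1 - X0 1*X1 0*X2 3 + X0 1*X1 3*X2 0 + X0 3*X1 0*X2 1 - X0 3*X1 1*X2 0) * h2


lemma leaf_5_3 (w : Fin 6 → Fin 6 → ℝ) (X0 X1 X2 : V)
    (h1 : -(w 1 3) * w 4 5 + w 1 4 * w 3 5 - w 1 5 * w 3 4 = 0) (h2 : -(w 0 3) * w 4 5 + w 0 4 * w 3 5 - w 0 5 * w 3 4 = 0) (h3 : w 0 2 * w 3 5 - w 0 3 * w 2 5 + w 0 5 * w 2 3 + w 1 2 * w 4 5 - w 1 4 * w 2 5 + w 1 5 * w 2 4 = 0) :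
    S10 w X0 X1 X2 (e 5) (e 3) = 0 := by
  simp only [S10, dOm_eq, form2_eq, e_apply, Fin.reduceEq, reduceIte]
  linear_combination (- X0 0*X1 1*X2 2 + X0 0*X1 2*X2 1 + X0 1*X1 0*X2 2 - X0 1*X1 2*X2 0 - X0 2*X1 0*X2 1 + X0 2*X1 1*X2 0) * h2


lemma leaf_5_4 (w : Fin 6 → Fin 6 → ℝ) (X0 X1 X2 : V)
    (h1 : -(w 1 3) * w 4 5 + w 1 4 * w 3 5 - w 1 5 * w 3 4 = 0) (h2 : -(w 0 3) * w 4 5 + w 0 4 * w 3 5 - w 0 5 * w 3 4 = 0) (h3 : w 0 2 * w 3 5 - w 0 3 * w 2 5 + w 0 5 * w 2 3 + w 1 2 * w 4 5 - w 1 4 * w 2 5 + w 1 5 * w 2 4 = 0) :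
    S10 w X0 X1 X2 (e 5) (e 4) = 0 := by
  simp only [S10, dOm_eq, form2_eq, e_apply, Fin.reduceEq, reduceIte]
  linear_combination (- X0 0*X1 1*X2 2 + X0 0*X1 2*X2 1 + X0 1*X1 0*X2 2 - X0 1*X1 2*X2 0 - X0 2*X1 0*X2 1 + X0 2*X1 1*X2 0) * h1


lemma leaf_5_5 (w : Fin 6 → Fin 6 → ℝ) (X0 X1 X2 : V)
    (h1 : -(w 1 3) * w 4 5 + w 1 4 * w 3 5 - w 1 5 * w 3 4 = 0) (h2 : -(w 0 3) * w 4 5 + w 0 4 * w 3 5 - w 0 5 * w 3 4 = 0) (h3 : w 0 2 * w 3 5 - w 0 3 * w 2 5 + w 0 5 * w 2 3 + w 1 2 * w 4 5 - w 1 4 * w 2 5 + w 1 5 * w 2 4 = 0) :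
    S10 w X0 X1 X2 (e 5) (e 5) = 0 := by
  simp only [S10, dOm_eq, form2_eq, e_apply, Fin.reduceEq, reduceIte]
  linear_combination (0:ℝ) * h1


lemma ev1 (w : Fin 6 → Fin 6 → ℝ) :
    S10 w (e 0) (e 1) (e 2) (e 4) (e 5) = -(w 1 3) * w 4 5 + w 1 4 * w 3 5 - w 1 5 * w 3 4 := by
  simp only [S10, dOm_eq, form2_eq, e_apply, Fin.reduceEq, reduceIte]
  ring


lemma ev2 (w : Fin 6 → Fin 6 → ℝ) :
    S10 w (e 0) (e 1) (e 2) (e 3) (e 5) = -(w 0 3) * w 4 5 + w 0 4 * w 3 5 - w 0 5 * w 3 4 := by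
  simp only [S10, dOm_eq, form2_eq, e_apply, Fin.reduceEq, reduceIte]
  ring


lemma ev3 (w : Fin 6 → Fin 6 → ℝ) :
    S10 w (e 0) (e 1) (e 2) (e 3) (e 4) = w 0 2 * w 3 5 - w 0 3 * w 2 5 + w 0 5 * w 2 3 + w 1 2 * w 4 5 - w 1 4 * w 2 5 + w 1 5 * w 2 4 := by
  simp only [S10, dOm_eq, form2_eq, e_apply, Fin.reduceEq, reduceIte]
  ring


open Equiv Equiv.Perm in
lemma expand5 (f : Perm (Fin 5) → ℝ) : ∑ σ : Perm (Fin 5), f σ =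
    ∑ a : Fin 5, ∑ b : Fin 4, ∑ c : Fin 3, ∑ d : Fin 2,
      f (decomposeFin.symm (a, decomposeFin.symm (b, decomposeFin.symm (c, decomposeFin.symm (d, 1))))) := by
  rw [← Equiv.sum_comp decomposeFin.symm f, Fintype.sum_prod_type]
  refine Finset.sum_congr rfl fun a _ => ?_
  rw [← Equiv.sum_comp decomposeFin.symm (fun e => f (decomposeFin.symm (a, e))), Fintype.sum_prod_type]
  refine Finset.sum_congr rfl fun b _ => ?_
  rw [← Equiv.sum_comp decomposeFin.symm (fun e => f (decomposeFin.symm (a, decomposeFin.symm (b, e)))), Fintype.sum_prod_type]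
  refine Finset.sum_congr rfl fun c _ => ?_
  rw [← Equiv.sum_comp decomposeFin.symm
    (fun e => f (decomposeFin.symm (a, decomposeFin.symm (b, decomposeFin.symm (c, e))))), Fintype.sum_prod_type]
  refine Finset.sum_congr rfl fun d _ => ?_
  rw [Fintype.sum_subsingleton _ 1]

open Equiv Equiv.Perm in
lemma F_eq_S10 (w : Fin 6 → Fin 6 → ℝ) (Xs : Fin 5 → V) :
    wedge23 (form2 w) (dOm (form2 w)) Xs = S10 w (Xs 0) (Xs 1) (Xs 2) (Xs 3) (Xs 4) := by
  rw [wedge23, expand5]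
  simp only [Fin.sum_univ_five, Fin.sum_univ_four, Fin.sum_univ_three, Fin.sum_univ_two]
  simp only [show (1:Fin 5) = (0:Fin 4).succ from rfl, show (2:Fin 5) = (1:Fin 4).succ from rfl, show (3:Fin 5) = (2:Fin 4).succ from rfl, show (4:Fin 5) = (3:Fin 4).succ from rfl, show (1:Fin 4) = (0:Fin 3).succ from rfl, show (2:Fin 4) = (1:Fin 3).succ from rfl, show (3:Fin 4) = (2:Fin 3).succ from rfl, show (1:Fin 3) = (0:Fin 2).succ from rfl, show (2:Fin 3) = (1:Fin 2).succ from rfl, show (1:Fin 2) = (0:Fin 1).succ from rfl,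
    Equiv.Perm.decomposeFin_symm_apply_zero, Equiv.Perm.decomposeFin_symm_apply_succ,
    Equiv.Perm.decomposeFin.symm_sign, Equiv.Perm.sign_one]
  norm_num [Fin.succAbove, Fin.lt_def, Equiv.swap_apply_def, Fin.ext_iff]
  simp only [show Fin.succ (0:Fin 4) = (1:Fin 5) from rfl, show Fin.succ (1:Fin 4) = (2:Fin 5) from rfl, show Fin.succ (2:Fin 4) = (3:Fin 5) from rfl, show Fin.succ (3:Fin 4) = (4:Fin 5) from rfl, show Fin.succ (0:Fin 3) = (1:Fin 4) from rfl, show Fin.succ (1:Fin 3) = (2:Fin 4) from rfl, show Fin.succ (2:Fin 3) = (3:Fin 4) from rfl, show Fin.succ (0:Fin 2) = (1:Fin 3) from rfl, show Fin.succ (1:Fin 2) = (2:Fin 3) from rfl, show Fin.succ (0:Fin 1) = (1:Fin 2) from rfl]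
  simp only [S10, form2_anti w (Xs 0) (Xs 1), form2_anti w (Xs 0) (Xs 2), form2_anti w (Xs 0) (Xs 3), form2_anti w (Xs 0) (Xs 4), form2_anti w (Xs 1) (Xs 2), form2_anti w (Xs 1) (Xs 3), form2_anti w (Xs 1) (Xs 4), form2_anti w (Xs 2) (Xs 3), form2_anti w (Xs 2) (Xs 4), form2_anti w (Xs 3) (Xs 4), dOm_yxz w (Xs 0) (Xs 1) (Xs 2), dOm_xzy w (Xs 0) (Xs 1) (Xs 2), dOm_zyx w (Xs 0) (Xs 1) (Xs 2), dOm_yzx w (Xs 0) (Xs 1) (Xs 2), dOm_zxy w (Xs 0) (Xs 1) (Xs 2), dOm_yxz w (Xs 0) (Xs 1) (Xs 3), dOm_xzy w (Xs 0) (Xs 1) (Xs 3), dOm_zyx w (Xs 0) (Xs 1) (Xs 3), dOm_yzx w (Xs 0) (Xs 1) (Xs 3), dOm_zxy w (Xs 0) (Xs 1) (Xs 3), dOm_yxz w (Xs 0) (Xs 1) (Xs 4), dOm_xzy w (Xs 0) (Xs 1) (Xs 4), dOm_zyx w (Xs 0) (Xs 1) (Xs 4), dOm_yzx w (Xs 0)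 (Xs 1) (Xs 4), dOm_zxy w (Xs 0) (Xs 1) (Xs 4), dOm_yxz w (Xs 0) (Xs 2) (Xs 3), dOm_xzy w (Xs 0) (Xs 2) (Xs 3), dOm_zyx w (Xs 0) (Xs 2) (Xs 3), dOm_yzx w (Xs 0) (Xs 2) (Xs 3), dOm_zxy w (Xs 0) (Xs 2) (Xs 3), dOm_yxz w (Xs 0) (Xs 2) (Xs 4), dOm_xzy w (Xs 0) (Xs 2) (Xs 4), dOm_zyx w (Xs 0) (Xs 2) (Xs 4), dOm_yzx w (Xs 0) (Xs 2) (Xs 4), dOm_zxy w (Xs 0) (Xs 2) (Xs 4), dOm_yxz w (Xs 0) (Xs 3) (Xs 4), dOm_xzy w (Xs 0) (Xs 3) (Xs 4), dOm_zyx w (Xs 0) (Xs 3) (Xs 4), dOm_yzx w (Xs 0) (Xs 3) (Xs 4), dOm_zxy w (Xs 0) (Xs 3) (Xs 4), dOm_yxz w (Xs 1) (Xs 2) (Xs 3), dOm_xzy w (Xs 1) (Xs 2) (Xs 3), dOm_zyx w (Xs 1) (Xs 2) (Xs 3), dOm_yzx w (Xs 1) (Xs 2) (Xs 3), dOm_zxy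 w (Xs 1) (Xs 2) (Xs 3), dOm_yxz w (Xs 1) (Xs 2) (Xs 4), dOm_xzy w (Xs 1) (Xs 2) (Xs 4), dOm_zyx w (Xs 1) (Xs 2) (Xs 4), dOm_yzx w (Xs 1) (Xs 2) (Xs 4), dOm_zxy w (Xs 1) (Xs 2) (Xs 4), dOm_yxz w (Xs 1) (Xs 3) (Xs 4), dOm_xzy w (Xs 1) (Xs 3) (Xs 4), dOm_zyx w (Xs 1) (Xs 3) (Xs 4), dOm_yzx w (Xs 1) (Xs 3) (Xs 4), dOm_zxy w (Xs 1) (Xs 3) (Xs 4), dOm_yxz w (Xs 2) (Xs 3) (Xs 4), dOm_xzy w (Xs 2) (Xs 3) (Xs 4), dOm_zyx w (Xs 2) (Xs 3) (Xs 4), dOm_yzx w (Xs 2) (Xs 3) (Xs 4), dOm_zxy w (Xs 2) (Xs 3) (Xs 4)]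
  ring

/-- for an arbitrary 2-form `ω = Σ_{1≤i<j≤6} w_{ij} e^i∧e^j` on 𝔤₁,
`ω∧dω = 0` iff the three stated quadratic equations on the coefficients hold.
(Coefficients are 0-indexed: `w 0 1 = w₁₂`, etc.) -/
theorem statement0 (w : Fin 6 → Fin 6 → ℝ) :
    (∀ Xs : Fin 5 → V, wedge23 (form2 w) (dOm (form2 w)) Xs = 0) ↔
      (-(w 1 3) * w 4 5 + w 1 4 * w 3 5 - w 1 5 * w 3 4 = 0 ∧
        -(w 0 3) * w 4 5 + w 0 4 * w 3 5 - w 0 5 * w 3 4 = 0 ∧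
        w 0 2 * w 3 5 - w 0 3 * w 2 5 + w 0 5 * w 2 3 +
          w 1 2 * w 4 5 - w 1 4 * w 2 5 + w 1 5 * w 2 4 = 0) := by
  constructor
  · intro h
    refine ⟨?_, ?_, ?_⟩
    · have h1 := h ![e 0, e 1, e 2, e 4, e 5]
      rw [F_eq_S10] at h1
      simp only [show (![e 0, e 1, e 2, e 4, e 5] : Fin 5 → V) 0 = e 0 from rfl, show (![e 0, e 1, e 2, e 4, e 5] : Fin 5 → V) 1 = e 1 from rfl, show (![e 0, e 1, e 2, e 4, e 5] : Fin 5 → V) 2 = e 2 from rfl, show (![e 0, e 1, e 2, e 4, e 5] : Fin 5 → V) 3 = e 4 from rfl, show (![e 0, e 1, e 2, e 4, e 5] : Fin 5 → V) 4 = e 5 from rfl] at h1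
      rw [ev1] at h1
      exact h1
    · have h1 := h ![e 0, e 1, e 2, e 3, e 5]
      rw [F_eq_S10] at h1
      simp only [show (![e 0, e 1, e 2, e 3, e 5] : Fin 5 → V) 0 = e 0 from rfl, show (![e 0, e 1, e 2, e 3, e 5] : Fin 5 → V) 1 = e 1 from rfl, show (![e 0, e 1, e 2, e 3, e 5] : Fin 5 → V) 2 = e 2 from rfl, show (![e 0, e 1, e 2, e 3, e 5] : Fin 5 → V) 3 = e 3 from rfl, show (![e 0, e 1, e 2, e 3, e 5] : Fin 5 → V) 4 = e 5 from rfl] at h1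
      rw [ev2] at h1
      exact h1
    · have h1 := h ![e 0, e 1, e 2, e 3, e 4]
      rw [F_eq_S10] at h1
      simp only [show (![e 0, e 1, e 2, e 3, e 4] : Fin 5 → V) 0 = e 0 from rfl, show (![e 0, e 1, e 2, e 3, e 4] : Fin 5 → V) 1 = e 1 from rfl, show (![e 0, e 1, e 2, e 3, e 4] : Fin 5 → V) 2 = e 2 from rfl, show (![e 0, e 1, e 2, e 3, e 4] : Fin 5 → V) 3 = e 3 from rfl, show (![e 0, e 1, e 2, e 3, e 4] : Fin 5 → V) 4 = e 4 from rfl] at h1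
      rw [ev3] at h1
      exact h1
  · rintro ⟨h1, h2, h3⟩ Xs
    rw [F_eq_S10, S10_expand34]
    simp only [leaf_0_0 w (Xs 0) (Xs 1) (Xs 2) h1 h2 h3, leaf_0_1 w (Xs 0) (Xs 1) (Xs 2) h1 h2 h3, leaf_0_2 w (Xs 0) (Xs 1) (Xs 2) h1 h2 h3, leaf_0_3 w (Xs 0) (Xs 1) (Xs 2) h1 h2 h3, leaf_0_4 w (Xs 0) (Xs 1) (Xs 2) h1 h2 h3, leaf_0_5 w (Xs 0) (Xs 1) (Xs 2) h1 h2 h3, leaf_1_0 w (Xs 0) (Xs 1) (Xs 2) h1 h2 h3, leaf_1_1 w (Xs 0) (Xs 1) (Xs 2) h1 h2 h3, leaf_1_2 w (Xs 0) (Xs 1) (Xs 2) h1 h2 h3, leaf_1_3 w (Xs 0) (Xs 1) (Xs 2) h1 h2 h3, leaf_1_4 w (Xs 0) (Xs 1) (Xs 2) h1 h2 h3, leaf_1_5 w (Xs 0) (Xs 1) (Xs 2) h1 h2 h3, leaf_2_0 w (Xs 0) (Xs 1) (Xs 2) h1 h2 h3, leaf_2_1 w (Xs 0) (Xs 1) (Xs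 2) h1 h2 h3, leaf_2_2 w (Xs 0) (Xs 1) (Xs 2) h1 h2 h3, leaf_2_3 w (Xs 0) (Xs 1) (Xs 2) h1 h2 h3, leaf_2_4 w (Xs 0) (Xs 1) (Xs 2) h1 h2 h3, leaf_2_5 w (Xs 0) (Xs 1) (Xs 2) h1 h2 h3, leaf_3_0 w (Xs 0) (Xs 1) (Xs 2) h1 h2 h3, leaf_3_1 w (Xs 0) (Xs 1) (Xs 2) h1 h2 h3, leaf_3_2 w (Xs 0) (Xs 1) (Xs 2) h1 h2 h3, leaf_3_3 w (Xs 0) (Xs 1) (Xs 2) h1 h2 h3, leaf_3_4 w (Xs 0) (Xs 1) (Xs 2) h1 h2 h3, leaf_3_5 w (Xs 0) (Xs 1) (Xs 2) h1 h2 h3, leaf_4_0 w (Xs 0) (Xs 1) (Xs 2) h1 h2 h3, leaf_4_1 w (Xs 0) (Xs 1) (Xs 2) h1 h2 h3, leaf_4_2 w (Xs 0) (Xs 1) (Xs 2) h1 h2 h3, leaf_4_3 w (Xs 0) (Xs 1) (Xs 2) h1 h2 h3, leaf_4_4 w (Xs 0) (Xs 1) (Xs 2) h1 h2 h3, leaf_4_5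 w (Xs 0) (Xs 1) (Xs 2) h1 h2 h3, leaf_5_0 w (Xs 0) (Xs 1) (Xs 2) h1 h2 h3, leaf_5_1 w (Xs 0) (Xs 1) (Xs 2) h1 h2 h3, leaf_5_2 w (Xs 0) (Xs 1) (Xs 2) h1 h2 h3, leaf_5_3 w (Xs 0) (Xs 1) (Xs 2) h1 h2 h3, leaf_5_4 w (Xs 0) (Xs 1) (Xs 2) h1 h2 h3, leaf_5_5 w (Xs 0) (Xs 1) (Xs 2) h1 h2 h3, mul_zero, add_zero, zero_add]
end
end

section
/- Let ξ₃₆ = 1 or ξ₃₆ = −1, and let J be the endomorphism of 𝔤₁ with J e₁ = e₂, J e₂ = −e₁, J e₃ = −ξ₃₆ e₆, J e₄ = e₅, J e₅ = −e₄, J e₆ = ξ₃₆ e₃. Then J² = −Id and the Nijenhuis tensor N_J vanishes identically, i.e. J is an integrable (complex) structure on 𝔤₁. -/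
open Finset

noncomputable section

/-- The Nijenhuis tensor of an endomorphism `J` with `J² = −Id`:
`N_J(X,Y) = [JX,JY] − [X,Y] − J[JX,Y] − J[X,JY]`. -/
def nijJ (J : V → V) (X Y : V) : V :=
  bra (J X) (J Y) - bra X Y - J (bra (J X) Y) - J (bra X (J Y))

/-- The endomorphism `J` of 𝔤₁ with `J e₁ = e₂`, `J e₂ = −e₁`, `J e₃ = −ξ₃₆ e₆`,
`J e₄ = e₅`, `J e₅ = −e₄`, `J e₆ = ξ₃₆ e₃` (0-indexed below). -/
def Jxi (ξ : ℝ) : V → V := fun X =>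
  X 0 • e 1 - X 1 • e 0 - (ξ * X 2) • e 5 + X 3 • e 4 - X 4 • e 3 + (ξ * X 5) • e 2

set_option maxHeartbeats 4000000 in
/-- for `ξ₃₆ = ±1`, the endomorphism `J` above satisfies `J² = −Id`
and its Nijenhuis tensor vanishes identically, i.e. `J` is an integrable complex
structure on 𝔤₁. -/
theorem statement1 (ξ : ℝ) (hξ : ξ = 1 ∨ ξ = -1) :
    (∀ X : V, Jxi ξ (Jxi ξ X) = -X) ∧ (∀ X Y : V, nijJ (Jxi ξ) X Y = 0) := by
  rcases hξ with h | h <;> subst h <;> constructor <;>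
    first
    | (intro X; funext i; fin_cases i <;> (simp [Jxi, e, Pi.single_apply]; try ring))
    | (intro X Y; funext i; fin_cases i <;> (simp [nijJ, bra, Jxi, e, Pi.single_apply]; try ring))
end
end

section
/- Let w₄₆ ≠ 0 and let P be the endomorphism of 𝔤₁ with P e₁ = e₁ − (2w₁₆/w₄₆) e₄ − (2w₂₆/w₄₆) e₅ + ((2w₁₆w₃₆ + 2w₂₆w₄₅)/w₄₆²) e₆, P e₂ = −e₂ + ((−2w₂₄w₄₆ + 2w₂₆w₃₆)/w₄₆²) e₆, P e₃ = e₃ − (2w₃₆/w₄₆) e₄ − (2w₄₅/w₄₆) e₅ + ((2w₃₆² + 2w₄₅²)/w₄₆²) e₆, P e₄ = −e₄ + (2w₃₆/w₄₆) e₆, P e₅ = −e₅ + (2w₄₅/w₄₆) e₆, P e₆ = e₆. Then P² = Id, trace P = 0, and P is compatible with the semi-Kähler form ω₂ of the family ω₂ = w₁₂ e¹∧e² + Ω₁₃ e¹∧e³ + w₁₄ e¹∧e⁴ + (w₁₆w₄₅/w₄₆) e¹∧e⁵ + w₁₆ e¹∧e⁶ + w₂₃ e²∧e³ + w₂₄ e²∧e⁴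 + (w₂₆w₄₅/w₄₆) e²∧e⁵ + w₂₆ e²∧e⁶ + w₃₄ e³∧e⁴ + w₃₅ e³∧e⁵ + w₃₆ e³∧e⁶ + w₄₅ e⁴∧e⁵ + w₄₆ e⁴∧e⁶ (with Ω₁₃ = (w₁₄w₃₆w₄₆ − w₁₆w₃₄w₄₆ − w₂₆w₃₅w₄₆ + w₂₆w₃₆w₄₅)/w₄₆²), in the sense that ω₂(PX, PY) = −ω₂(X, Y) for all X, Y ∈ 𝔤₁. -/
open Finset

noncomputable section

/-- The 2-form `ω₂` on 𝔤₁ from the second family of semi-Kähler forms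
(0-indexed coefficient matrix; `w₁₅` and `w₂₅` are determined by the others,
and `Ω₁₃` is the stated rational expression). -/
def om2 (w12 w14 w16 w23 w24 w26 w34 w35 w36 w45 w46 : ℝ) : V → V → ℝ :=
  form2
    ![![0, w12,
        (w14 * w36 * w46 - w16 * w34 * w46 - w26 * w35 * w46 + w26 * w36 * w45) / w46 ^ 2,
        w14, w16 * w45 / w46, w16],
      ![0, 0, w23, w24, w26 * w45 / w46, w26],
      ![0, 0, 0, w34, w35, w36],
      ![0, 0, 0, 0, w45, w46],
      ![0, 0, 0, 0, 0, 0],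
      ![0, 0, 0, 0, 0, 0]]

/-- The endomorphism `P` of 𝔤₁ obtained from the Hitchin construction applied to `dω₂`
(0-indexed: `P e₁ = e₁ − (2w₁₆/w₄₆)e₄ − (2w₂₆/w₄₆)e₅ + ((2w₁₆w₃₆+2w₂₆w₄₅)/w₄₆²)e₆`, etc.). -/
def Pg1 (w16 w24 w26 w36 w45 w46 : ℝ) : V → V := fun X =>
  X 0 • (e 0 - (2 * w16 / w46) • e 3 - (2 * w26 / w46) • e 4 +
      ((2 * w16 * w36 + 2 * w26 * w45) / w46 ^ 2) • e 5) +
  X 1 • (-e 1 + ((-2 * w24 * w46 + 2 * w26 * w36) / w46 ^ 2) • e 5) +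
  X 2 • (e 2 - (2 * w36 / w46) • e 3 - (2 * w45 / w46) • e 4 +
      ((2 * w36 ^ 2 + 2 * w45 ^ 2) / w46 ^ 2) • e 5) +
  X 3 • (-e 3 + (2 * w36 / w46) • e 5) +
  X 4 • (-e 4 + (2 * w45 / w46) • e 5) +
  X 5 • e 5

lemma form2_expand (w : Fin 6 → Fin 6 → ℝ) (X Y : V) : form2 w X Y =
    w 0 1 * (X 0 * Y 1 - X 1 * Y 0) + w 0 2 * (X 0 * Y 2 - X 2 * Y 0) +
    w 0 3 * (X 0 * Y 3 - X 3 * Y 0) + w 0 4 * (X 0 * Y 4 - X 4 * Y 0) +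
    w 0 5 * (X 0 * Y 5 - X 5 * Y 0) + w 1 2 * (X 1 * Y 2 - X 2 * Y 1) +
    w 1 3 * (X 1 * Y 3 - X 3 * Y 1) + w 1 4 * (X 1 * Y 4 - X 4 * Y 1) +
    w 1 5 * (X 1 * Y 5 - X 5 * Y 1) + w 2 3 * (X 2 * Y 3 - X 3 * Y 2) +
    w 2 4 * (X 2 * Y 4 - X 4 * Y 2) + w 2 5 * (X 2 * Y 5 - X 5 * Y 2) +
    w 3 4 * (X 3 * Y 4 - X 4 * Y 3) + w 3 5 * (X 3 * Y 5 - X 5 * Y 3) +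
    w 4 5 * (X 4 * Y 5 - X 5 * Y 4) := by
  simp only [form2, Fin.sum_univ_six, Fin.reduceLT, ite_true, ite_false]
  ring

lemma vec6_five (a b c d e f : ℝ) : ![a,b,c,d,e,f] 5 = f := rfl

lemma om2_expand (w12 w14 w16 w23 w24 w26 w34 w35 w36 w45 w46 : ℝ) (X Y : V) :
    om2 w12 w14 w16 w23 w24 w26 w34 w35 w36 w45 w46 X Y =
    w12 * (X 0 * Y 1 - X 1 * Y 0) +
    (w14 * w36 * w46 - w16 * w34 * w46 - w26 * w35 * w46 + w26 * w36 * w45) / w46 ^ 2 *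
      (X 0 * Y 2 - X 2 * Y 0) +
    w14 * (X 0 * Y 3 - X 3 * Y 0) + w16 * w45 / w46 * (X 0 * Y 4 - X 4 * Y 0) +
    w16 * (X 0 * Y 5 - X 5 * Y 0) + w23 * (X 1 * Y 2 - X 2 * Y 1) +
    w24 * (X 1 * Y 3 - X 3 * Y 1) + w26 * w45 / w46 * (X 1 * Y 4 - X 4 * Y 1) +
    w26 * (X 1 * Y 5 - X 5 * Y 1) + w34 * (X 2 * Y 3 - X 3 * Y 2) +
    w35 * (X 2 * Y 4 - X 4 * Y 2) + w36 * (X 2 * Y 5 - X 5 * Y 2) +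
    w45 * (X 3 * Y 4 - X 4 * Y 3) + w46 * (X 3 * Y 5 - X 5 * Y 3) +
    0 * (X 4 * Y 5 - X 5 * Y 4) := by
  rw [om2, form2_expand]
  rfl

set_option maxHeartbeats 2000000 in
/-- for `w₄₆ ≠ 0`, the endomorphism `P` satisfies `P² = Id`, `trace P = 0`,
and is compatible with the semi-Kähler form `ω₂`: `ω₂(PX,PY) = −ω₂(X,Y)` for all `X, Y`. -/
theorem statement4 (w12 w14 w16 w23 w24 w26 w34 w35 w36 w45 w46 : ℝ)
    (h : w46 ≠ 0) :
    (∀ X : V, Pg1 w16 w24 w26 w36 w45 w46 (Pg1 w16 w24 w26 w36 w45 w46 X) = X) ∧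
    (∑ i : Fin 6, Pg1 w16 w24 w26 w36 w45 w46 (e i) i = 0) ∧
    (∀ X Y : V,
      om2 w12 w14 w16 w23 w24 w26 w34 w35 w36 w45 w46
          (Pg1 w16 w24 w26 w36 w45 w46 X) (Pg1 w16 w24 w26 w36 w45 w46 Y) =
        -om2 w12 w14 w16 w23 w24 w26 w34 w35 w36 w45 w46 X Y) := by
  set P := Pg1 w16 w24 w26 w36 w45 w46 with hPdef
  have h0 : ∀ X : V, P X 0 = X 0 := by
    intro X; simp [hPdef, Pg1, e, Pi.single_apply]
  have h1 : ∀ X : V, P X 1 = -X 1 := by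
    intro X; simp [hPdef, Pg1, e, Pi.single_apply]
  have h2 : ∀ X : V, P X 2 = X 2 := by
    intro X; simp [hPdef, Pg1, e, Pi.single_apply]
  have h3 : ∀ X : V, P X 3 = -(2*w16/w46) * X 0 - (2*w36/w46) * X 2 - X 3 := by
    intro X; simp [hPdef, Pg1, e, Pi.single_apply]; ring
  have h4 : ∀ X : V, P X 4 = -(2*w26/w46) * X 0 - (2*w45/w46) * X 2 - X 4 := by
    intro X; simp [hPdef, Pg1, e, Pi.single_apply]; ring
  have h5 : ∀ X : V, P X 5 = ((2*w16*w36 + 2*w26*w45)/w46^2) * X 0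
      + ((-2*w24*w46 + 2*w26*w36)/w46^2) * X 1 + ((2*w36^2 + 2*w45^2)/w46^2) * X 2
      + (2*w36/w46) * X 3 + (2*w45/w46) * X 4 + X 5 := by
    intro X; simp [hPdef, Pg1, e, Pi.single_apply]; ring
  refine ⟨?_, ?_, ?_⟩
  · intro X
    funext i
    fin_cases i
    · show P (P X) 0 = X 0
      simp only [h0]
    · show P (P X) 1 = X 1
      simp only [h1]; ring
    · show P (P X) 2 = X 2
      simp only [h2]
    · show P (P X) 3 = X 3
      simp only [h0, h2, h3]; field_simp; ring
    · show P (P X) 4 = X 4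
      simp only [h0, h2, h4]; field_simp; ring
    · show P (P X) 5 = X 5
      simp only [h0, h1, h2, h3, h4, h5]; field_simp; ring
  · simp only [Fin.sum_univ_six, h0, h1, h2, h3, h4, h5]
    simp [e, Pi.single_apply]
  · intro X Y
    rw [om2_expand, om2_expand]
    simp only [h0, h1, h2, h3, h4, h5]
    field_simp
    ring
end
end

section
/- Let w₄₆ ≠ 0 and let P be the endomorphism of 𝔤₁ with P e₁ = e₁ − (2w₁₆/w₄₆) e₄ − (2w₂₆/w₄₆) e₅ + ((2w₁₆w₃₆ + 2w₂₆w₄₅)/w₄₆²) e₆, P e₂ = −e₂ + ((−2w₂₄w₄₆ + 2w₂₆w₃₆)/w₄₆²) e₆, P e₃ = e₃ − (2w₃₆/w₄₆) e₄ − (2w₄₅/w₄₆) e₅ + ((2w₃₆² + 2w₄₅²)/w₄₆²) e₆, P e₄ = −e₄ + (2w₃₆/w₄₆) e₆, P e₅ = −e₅ + (2w₄₅/w₄₆) e₆, P e₆ = e₆. Then P is not integrable: there exist X, Y ∈ 𝔤₁ with N_P(X,Y) ≠ 0. -/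
open Finset

noncomputable section

/-- The Nijenhuis tensor of an endomorphism `P` with `P² = Id`:
`N_P(X,Y) = [PX,PY] + [X,Y] − P[PX,Y] − P[X,PY]`. -/
def nijP (P : V → V) (X Y : V) : V :=
  bra (P X) (P Y) + bra X Y - P (bra (P X) Y) - P (bra X (P Y))

/-- for `w₄₆ ≠ 0`, the almost paracomplex structure `P` is not integrable:
its Nijenhuis tensor does not vanish identically. -/
theorem statement5 (w16 w24 w26 w36 w45 w46 : ℝ) (h : w46 ≠ 0) :
    ∃ X Y : V, nijP (Pg1 w16 w24 w26 w36 w45 w46) X Y ≠ 0 := by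
  refine ⟨e 0, e 2, fun hz => ?_⟩
  have h3 := congrFun hz 3
  simp [nijP, Pg1, bra, e, Pi.single_apply] at h3
  norm_num at h3
end
end

section
/- Let 𝔤 be a nonzero finite-dimensional real Lie algebra with an almost complex structure J (an endomorphism with J² = −Id), and define the increasing sequence of subspaces 𝔞₀(J) = 0 and 𝔞_s(J) = {X ∈ 𝔤 : [X,𝔤] ⊆ 𝔞_{s−1}(J) and [JX,𝔤] ⊆ 𝔞_{s−1}(J)} for s ≥ 1. If J is nilpotent, i.e. there exists p with 𝔞_p(J) = 𝔤, then 𝔞₁(J) is a J-invariant ideal contained in the center of 𝔤 and dim 𝔞₁(J) ≥ 2. -/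
/-- The ascending series of `J`-invariant subspaces of a real Lie algebra `L`
associated with an endomorphism `J`:
`𝔞₀(J) = 0` and `𝔞_s(J) = {X : [X,L] ⊆ 𝔞_{s−1}(J) and [JX,L] ⊆ 𝔞_{s−1}(J)}`. -/
def aSeries {L : Type*} [LieRing L] [LieAlgebra ℝ L] (J : Module.End ℝ L) :
    ℕ → Submodule ℝ L
  | 0 => ⊥
  | (s + 1) =>
    { carrier := {X : L | ∀ Y : L, ⁅X, Y⁆ ∈ aSeries J s ∧ ⁅J X, Y⁆ ∈ aSeries J s}
      zero_mem' := by
        intro Y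
        simp
      add_mem' := by
        intro a b ha hb Y
        refine ⟨?_, ?_⟩
        · simpa [add_lie] using (aSeries J s).add_mem (ha Y).1 (hb Y).1
        · simpa [map_add, add_lie] using (aSeries J s).add_mem (ha Y).2 (hb Y).2
      smul_mem' := by
        intro c a ha Y
        refine ⟨?_, ?_⟩
        · simpa [smul_lie] using (aSeries J s).smul_mem c (ha Y).1
        · simpa [map_smul, smul_lie] using (aSeries J s).smul_mem c (ha Y).2 }


lemma mem_aSeries_succ {L : Type*} [LieRing L] [LieAlgebra ℝ L] (J : Module.End ℝ L)
    (s : ℕ) (X : L) :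
    X ∈ aSeries J (s + 1) ↔ ∀ Y : L, ⁅X, Y⁆ ∈ aSeries J s ∧ ⁅J X, Y⁆ ∈ aSeries J s :=
  Iff.rfl

lemma mem_a1 {L : Type*} [LieRing L] [LieAlgebra ℝ L] (J : Module.End ℝ L) (X : L) :
    X ∈ aSeries J 1 ↔ ∀ Y : L, ⁅X, Y⁆ = 0 ∧ ⁅J X, Y⁆ = 0 := by
  rw [mem_aSeries_succ]
  simp [aSeries]

lemma aSeries_eq_bot {L : Type*} [LieRing L] [LieAlgebra ℝ L] (J : Module.End ℝ L)
    (h1 : aSeries J 1 = ⊥) : ∀ s, aSeries J s = ⊥ := by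
  intro s
  induction s with
  | zero => rfl
  | succ n ih =>
    ext X
    rw [mem_aSeries_succ]
    simp only [ih, Submodule.mem_bot]
    rw [← mem_a1 J X, h1, Submodule.mem_bot]

/-- if `𝔤` is a nonzero finite-dimensional real Lie algebra with an
almost complex structure `J` (`J² = −Id`) which is nilpotent (`𝔞_p(J) = 𝔤` for some `p`),
then `𝔞₁(J)` is a `J`-invariant ideal contained in the center of `𝔤`, and
`dim 𝔞₁(J) ≥ 2`. -/
theorem statement16 {L : Type*} [LieRing L] [LieAlgebra ℝ L]
    [FiniteDimensional ℝ L] [Nontrivial L]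
    (J : Module.End ℝ L) (hJ : ∀ X : L, J (J X) = -X)
    (hnilp : ∃ p : ℕ, aSeries J p = ⊤) :
    (∀ X ∈ aSeries J 1, J X ∈ aSeries J 1) ∧
    (∀ X ∈ aSeries J 1, ∀ Y : L, ⁅Y, X⁆ ∈ aSeries J 1) ∧
    (∀ X ∈ aSeries J 1, ∀ Y : L, ⁅X, Y⁆ = 0) ∧
    2 ≤ Module.finrank ℝ (aSeries J 1) := by
  have ha1 : ∀ X ∈ aSeries J 1, ∀ Y : L, ⁅X, Y⁆ = 0 ∧ ⁅J X, Y⁆ = 0 := by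
    intro X hX
    exact (mem_a1 J X).1 hX
  have hinv : ∀ X ∈ aSeries J 1, J X ∈ aSeries J 1 := by
    intro X hX
    rw [mem_a1]
    intro Y
    refine ⟨(ha1 X hX Y).2, ?_⟩
    rw [hJ X, neg_lie, (ha1 X hX Y).1, neg_zero]
  have hcen : ∀ X ∈ aSeries J 1, ∀ Y : L, ⁅X, Y⁆ = 0 := fun X hX Y => (ha1 X hX Y).1
  refine ⟨hinv, ?_, hcen, ?_⟩
  · intro X hX Y
    rw [← lie_skew, hcen X hX Y, neg_zero]
    exact (aSeries J 1).zero_mem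
  · -- a₁ is nonzero
    have hne : aSeries J 1 ≠ ⊥ := by
      intro hbot
      obtain ⟨p, hp⟩ := hnilp
      have := aSeries_eq_bot J hbot p
      rw [hp] at this
      exact top_ne_bot this
    obtain ⟨X, hX, hX0⟩ := Submodule.exists_mem_ne_zero_of_ne_bot hne
    have hJX : J X ∈ aSeries J 1 := hinv X hX
    have hli : LinearIndependent ℝ ![(⟨X, hX⟩ : aSeries J 1), ⟨J X, hJX⟩] := by
      apply LinearIndependent.of_comp (aSeries J 1).subtype
      have hcomp : ((aSeries J 1).subtype ∘ ![(⟨X, hX⟩ : aSeries J 1), ⟨J X, hJX⟩]) = ![X, J X] := by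
        ext i; fin_cases i <;> rfl
      rw [hcomp, LinearIndependent.pair_iff]
      intro s t hst
      have hst' : s • X + t • J X = 0 := hst
      have h2 : s • J X + t • (-X) = 0 := by
        have := congrArg J hst'
        simpa [map_add, map_smul, hJ] using this
      have h3 : (s * s + t * t) • X = 0 := by
        have e1 := congrArg (fun z => s • z) hst'
        have e2 := congrArg (fun z => t • z) h2
        simp only [smul_add, smul_zero, smul_smul, smul_neg] at e1 e2
        have := congrArg₂ (· - ·) e1 e2
        simp only [sub_zero] at this
        rw [← this]
        module
      have hst2 : s * s + t * t = 0 := by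
        by_contra h
        exact hX0 (by simpa [h] using smul_eq_zero.mp h3)
      have hs : s = 0 := by nlinarith [sq_nonneg s, sq_nonneg t, mul_self_nonneg s, mul_self_nonneg t]
      have ht : t = 0 := by nlinarith [mul_self_nonneg s, mul_self_nonneg t]
      exact ⟨hs, ht⟩
    have := hli.fintype_card_le_finrank
    simpa using this
end
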